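/- arXiv:2501.06512 — 9 statements merged into one kernel-verified Lean document; each statement's English description precedes it below -/
import Mathlib

section
/- For all integers λ ≥ 0, ν ≥ 0 and μ ≥ 0, the generalized continuants satisfy the two Cassini-type identities: A_{ν+λ+μ−1} · B_{ν−1,λ} = A_{ν+λ−1} · B_{ν+μ−1,λ} + (−1)^{ν−1} · (a_{λ+1}·a_{λ+2}⋯a_{λ+ν}) · A_{λ−1} · B_{μ−1,ν+λ}, and B_{ν+λ+μ−1} · B_{ν−1,λ} = B_{ν+λ−1} · B_{ν+μ−1,λ} + (−1)^{ν−1} · (a_{λ+1}·a_{λ+2}⋯a_{λ+ν}) · B_{λ−1} · B_{μ−1,ν+λ}. -/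
/-!
All sequences involved solve the recurrence `x (n + 1) = b (n + 1) * x n + a (n + 1) * x (n - 1)`:
`n ↦ A n 0` and `n ↦ B n 0` from `n = 0` on, and `n ↦ B (n - l) l` from `n = l` on. For `μ = 1`
the identity says what the Casoratian of `C = A (·) 0` (or `B (·) 0`) and `B (· - λ) λ` is at
`ν + λ`: each step multiplies it by `-a (n + 1)`, and at `λ` it equals `-C (λ - 1)`. For general
`μ`, both sides are solutions in `n = ν + λ + μ - 1` agreeing at `μ = 0` and `μ = 1`.
-/

variable {R : Type*} [CommRing R] {a b : ℤ → R}

def SolvesContinuantRec (a b : ℤ → R) (m : ℤ) (x : ℤ → R) : Prop :=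
  ∀ n, m ≤ n → x (n + 1) = b (n + 1) * x n + a (n + 1) * x (n - 1)

def casoratian (x y : ℤ → R) (n : ℤ) : R :=
  x n * y (n - 1) - x (n - 1) * y n

namespace SolvesContinuantRec

variable {m : ℤ} {x y : ℤ → R}

theorem mono (hx : SolvesContinuantRec a b m x) {m' : ℤ} (h : m ≤ m') :
    SolvesContinuantRec a b m' x :=
  fun n hn => hx n (h.trans hn)

theorem add (hx : SolvesContinuantRec a b m x) (hy : SolvesContinuantRec a b m y) :
    SolvesContinuantRec a b m (fun n => x n + y n) := fun n hn => by
  dsimp only; rw [hx n hn, hy n hn]; ring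

theorem const_mul (c : R) (hx : SolvesContinuantRec a b m x) :
    SolvesContinuantRec a b m (fun n => c * x n) := fun n hn => by
  dsimp only; rw [hx n hn]; ring

theorem mul_const (hx : SolvesContinuantRec a b m x) (c : R) :
    SolvesContinuantRec a b m (fun n => x n * c) := fun n hn => by
  dsimp only; rw [hx n hn]; ring

theorem eq_of_eq_of_eq (hx : SolvesContinuantRec a b m x) (hy : SolvesContinuantRec a b m y)
    (h₀ : x (m - 1) = y (m - 1)) (h₁ : x m = y m) {n : ℤ} (hn : m - 1 ≤ n) : x n = y n := by
  have step : ∀ k : ℕ, x (m - 1 + k) = y (m - 1 + k) ∧ x (m + k) = y (m + k) := by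
    intro k
    induction k with
    | zero => simpa using ⟨h₀, h₁⟩
    | succ k ih =>
      have hk : m - 1 + ↑(k + 1) = m + k := by push_cast; ring
      have hk' : m + ↑(k + 1) = m + k + 1 := by push_cast; ring
      refine ⟨hk ▸ ih.2, ?_⟩
      rw [hk', hx _ (by omega), hy _ (by omega), show m + k - 1 = m - 1 + k by ring, ih.1, ih.2]
  obtain ⟨k, rfl⟩ : ∃ k : ℕ, n = m - 1 + k := ⟨(n - (m - 1)).toNat, by omega⟩
  exact (step k).1

theorem casoratian_succ (hx : SolvesContinuantRec a b m x) (hy : SolvesContinuantRec a b m y)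
    {n : ℤ} (hn : m ≤ n) : casoratian x y (n + 1) = -a (n + 1) * casoratian x y n := by
  simp only [casoratian, add_sub_cancel_right, hx n hn, hy n hn]; ring

theorem casoratian_add_nat (hx : SolvesContinuantRec a b m x)
    (hy : SolvesContinuantRec a b m y) (k : ℕ) :
    casoratian x y (m + k) =
      (-1) ^ k * (∏ i ∈ Finset.range k, a (m + 1 + i)) * casoratian x y m := by
  induction k with
  | zero => simp
  | succ k ih =>
    rw [Nat.cast_succ, ← add_assoc, casoratian_succ hx hy (by omega), ih,
      Finset.prod_range_succ, add_right_comm]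
    ring

end SolvesContinuantRec

theorem solvesContinuantRec_shift {X : ℤ → ℤ → R}
    (hrec : ∀ l ν : ℤ, 0 ≤ l → 1 ≤ ν →
      X ν l = b (l + ν) * X (ν - 1) l + a (l + ν) * X (ν - 2) l) {l : ℤ} (hl : 0 ≤ l) :
    SolvesContinuantRec a b l (fun n => X (n - l) l) := fun n hn => by
  dsimp only
  rw [hrec l (n + 1 - l) hl (by omega)]
  ring_nf

theorem solvesContinuantRec_zero {X : ℤ → ℤ → R}
    (hrec : ∀ l ν : ℤ, 0 ≤ l → 1 ≤ ν →
      X ν l = b (l + ν) * X (ν - 1) l + a (l + ν) * X (ν - 2) l) :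
    SolvesContinuantRec a b 0 (fun n => X n 0) := by
  simpa using solvesContinuantRec_shift hrec le_rfl

theorem cassini_of_solvesContinuantRec {C : ℤ → R} (hC : SolvesContinuantRec a b 0 C)
    {B : ℤ → ℤ → R} (hBm1 : ∀ l : ℤ, 0 ≤ l → B (-1) l = 0) (hB0 : ∀ l : ℤ, 0 ≤ l → B 0 l = 1)
    (hBrec : ∀ l ν : ℤ, 0 ≤ l → 1 ≤ ν →
      B ν l = b (l + ν) * B (ν - 1) l + a (l + ν) * B (ν - 2) l) (lam nu mu : ℕ) :
    C ((nu : ℤ) + lam + mu - 1) * B ((nu : ℤ) - 1) lam =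
      C ((nu : ℤ) + lam - 1) * B ((nu : ℤ) + mu - 1) lam +
        (-1 : R) ^ (nu + 1) * (∏ i ∈ Finset.range nu, a ((lam : ℤ) + 1 + i)) *
          C ((lam : ℤ) - 1) * B ((mu : ℤ) - 1) ((nu : ℤ) + lam) := by
  set l : ℤ := (lam : ℤ)
  set m : ℤ := (nu : ℤ) + l
  set K := (-1 : R) ^ (nu + 1) * (∏ i ∈ Finset.range nu, a (l + 1 + i)) * C (l - 1)
  have hml : m - l = nu := add_sub_cancel_right _ _
  have hD := solvesContinuantRec_shift hBrec (show 0 ≤ l by positivity)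
  have hE := solvesContinuantRec_shift hBrec (show 0 ≤ m by positivity)
  have cassini_one : C m * B (nu - 1) l = C (m - 1) * B nu l + K := by
    have h := (hC.mono (show 0 ≤ l by positivity)).casoratian_add_nat hD nu
    simp only [casoratian, sub_self, sub_sub_cancel_left, hBm1 l (by positivity),
      hB0 l (by positivity)] at h
    rw [show l + nu = m from add_comm _ _, sub_right_comm m 1 l, hml] at h
    simp only [K]
    linear_combination h
  have both_sides_agree := (hC.mono (show 0 ≤ m by positivity)).mul_const (B (nu - 1) l) |>.eq_of_eq_of_eq
    ((hD.mono (by omega)).const_mul (C (m - 1)) |>.add (hE.const_mul K))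
    (by simp [hBm1 m (by positivity), sub_right_comm _ 1 l, hml])
    (by simp [hB0 m (by positivity), cassini_one, hml])
    (n := m + mu - 1) (by omega)
  rwa [show m + mu - 1 - l = nu + mu - 1 by simp only [m]; ring,
    show m + mu - 1 - m = mu - 1 by ring] at both_sides_agree

theorem cassini_identity_general
    (a b : ℤ → ℤ)
    (A B : ℤ → ℤ → ℤ)
    (hBm1 : ∀ l : ℤ, 0 ≤ l → B (-1) l = 0) (hB0 : ∀ l : ℤ, 0 ≤ l → B 0 l = 1)
    (hArec : ∀ l ν : ℤ, 0 ≤ l → 1 ≤ ν →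
      A ν l = b (l + ν) * A (ν - 1) l + a (l + ν) * A (ν - 2) l)
    (hBrec : ∀ l ν : ℤ, 0 ≤ l → 1 ≤ ν →
      B ν l = b (l + ν) * B (ν - 1) l + a (l + ν) * B (ν - 2) l) :
    ∀ lam nu mu : ℕ,
      A ((nu : ℤ) + lam + mu - 1) 0 * B ((nu : ℤ) - 1) lam =
        A ((nu : ℤ) + lam - 1) 0 * B ((nu : ℤ) + mu - 1) lam +
          (-1 : ℤ) ^ (nu + 1) * (∏ i ∈ Finset.range nu, a ((lam : ℤ) + 1 + i)) *
            A ((lam : ℤ) - 1) 0 * B ((mu : ℤ) - 1) ((nu : ℤ) + lam) ∧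
      B ((nu : ℤ) + lam + mu - 1) 0 * B ((nu : ℤ) - 1) lam =
        B ((nu : ℤ) + lam - 1) 0 * B ((nu : ℤ) + mu - 1) lam +
          (-1 : ℤ) ^ (nu + 1) * (∏ i ∈ Finset.range nu, a ((lam : ℤ) + 1 + i)) *
            B ((lam : ℤ) - 1) 0 * B ((mu : ℤ) - 1) ((nu : ℤ) + lam) := fun lam nu mu =>
  ⟨cassini_of_solvesContinuantRec (solvesContinuantRec_zero hArec) hBm1 hB0 hBrec lam nu mu,
    cassini_of_solvesContinuantRec (solvesContinuantRec_zero hBrec) hBm1 hB0 hBrec lam nu mu⟩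

/-- Cassini's identity for generalized continuants. -/
theorem cassini_identity
    (a b : ℤ → ℤ)
    (ha : ∀ ν : ℤ, 1 ≤ ν → 0 < a ν) (hb : ∀ ν : ℤ, 0 ≤ ν → 0 < b ν)
    (A B : ℤ → ℤ → ℤ)
    (hAm1 : ∀ l : ℤ, 0 ≤ l → A (-1) l = 1) (hA0 : ∀ l : ℤ, 0 ≤ l → A 0 l = b l)
    (hBm1 : ∀ l : ℤ, 0 ≤ l → B (-1) l = 0) (hB0 : ∀ l : ℤ, 0 ≤ l → B 0 l = 1)
    (hArec : ∀ l ν : ℤ, 0 ≤ l → 1 ≤ ν →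
      A ν l = b (l + ν) * A (ν - 1) l + a (l + ν) * A (ν - 2) l)
    (hBrec : ∀ l ν : ℤ, 0 ≤ l → 1 ≤ ν →
      B ν l = b (l + ν) * B (ν - 1) l + a (l + ν) * B (ν - 2) l) :
    ∀ lam nu mu : ℕ,
      A ((nu : ℤ) + lam + mu - 1) 0 * B ((nu : ℤ) - 1) lam =
        A ((nu : ℤ) + lam - 1) 0 * B ((nu : ℤ) + mu - 1) lam +
          (-1 : ℤ) ^ (nu + 1) * (∏ i ∈ Finset.range nu, a ((lam : ℤ) + 1 + i)) *
            A ((lam : ℤ) - 1) 0 * B ((mu : ℤ) - 1) ((nu : ℤ) + lam) ∧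
      B ((nu : ℤ) + lam + mu - 1) 0 * B ((nu : ℤ) - 1) lam =
        B ((nu : ℤ) + lam - 1) 0 * B ((nu : ℤ) + mu - 1) lam +
          (-1 : ℤ) ^ (nu + 1) * (∏ i ∈ Finset.range nu, a ((lam : ℤ) + 1 + i)) *
            B ((lam : ℤ) - 1) 0 * B ((mu : ℤ) - 1) ((nu : ℤ) + lam) :=
  cassini_identity_general a b A B hBm1 hB0 hArec hBrec
end

section
/- For all integers λ and ν with 0 ≤ ν ≤ λ and d dividing λ − ν, one has: A_{λ−1} · B_ν − A_λ · B_{ν−1} = (−1)^ν · (a_λ·a_{λ−1}⋯a_{λ−ν+1}) · A_{λ−ν−1}, and B_{λ−1} · B_ν − B_λ · B_{ν−1} = (−1)^ν · (a_λ·a_{λ−1}⋯a_{λ−ν+1}) · B_{λ−ν−1} (the product over a is empty, i.e. equal to 1, when ν = 0). -/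
/-!
Write `s = λ - ν`. Periodicity makes `a` and `b` invariant under the shift by `s`, so the
two-term recurrences satisfied by `B` and by `X ∈ {A, B}` have the same coefficients at the
indices `ν` and `ν + s`. Expanding `B_{ν+1}` and `X_{ν+s+1}` by their recurrences, the `b`-terms
cancel and `X_{ν+s} B_{ν+1} - X_{ν+s+1} B_ν = -a_{ν+1} (X_{ν+s-1} B_ν - X_{ν+s} B_{ν-1})`,
so the identity follows by induction on `ν` from the case `ν = 0`, where `B_0 = 1`, `B_{-1} = 0`.
-/

open Finset

lemma apply_add_mul_eq_of_periodic {R : Type*} {f : ℤ → R} {d : ℕ}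
    (hf : ∀ j : ℤ, 1 ≤ j → f (j + d) = f j) (k : ℕ) :
    ∀ j : ℤ, 1 ≤ j → f (j + (d * k : ℕ)) = f j := by
  induction k with
  | zero => simp
  | succ k ih =>
    intro j hj
    have hshift : j + (d * (k + 1) : ℕ) = j + (d * k : ℕ) + d := by push_cast; ring
    rw [hshift, hf _ (by omega), ih j hj]

lemma continuant_shift_telescoping {R : Type*} [CommRing R] (a b X B : ℤ → R)
    (hX : ∀ ν : ℤ, 1 ≤ ν → X ν = b ν * X (ν - 1) + a ν * X (ν - 2))
    (hB : ∀ ν : ℤ, 1 ≤ ν → B ν = b ν * B (ν - 1) + a ν * B (ν - 2))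
    (hB0 : B 0 = 1) (hBm1 : B (-1) = 0) (s : ℕ)
    (ha : ∀ j : ℤ, 1 ≤ j → a (j + s) = a j) (hb : ∀ j : ℤ, 1 ≤ j → b (j + s) = b j) (n : ℕ) :
    X ((n : ℤ) + s - 1) * B n - X ((n : ℤ) + s) * B ((n : ℤ) - 1) =
      (-1) ^ n * (∏ i ∈ range n, a ((n : ℤ) + s - i)) * X ((s : ℤ) - 1) := by
  induction n with
  | zero => simp [hB0, hBm1]
  | succ n ih =>
    have hn : (1 : ℤ) ≤ n + 1 := by omega
    have hXsucc := hX ((n : ℤ) + 1 + s) (by omega)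
    have hBsucc := hB ((n : ℤ) + 1) hn
    rw [ha _ hn, hb _ hn] at hXsucc
    have hprod : ∏ i ∈ range (n + 1), a (((n + 1 : ℕ) : ℤ) + s - i) =
        (∏ i ∈ range n, a ((n : ℤ) + s - i)) * a ((n : ℤ) + 1) := by
      rw [prod_range_succ', Nat.cast_zero, sub_zero, Nat.cast_add_one, ha _ hn]
      congr 1
      exact prod_congr rfl fun i _ => congrArg a (by push_cast; ring)
    rw [hprod]
    push_cast
    simp only [add_sub_cancel_right, show (n : ℤ) + 1 - 2 = n - 1 by ring,
      show (n : ℤ) + 1 + s - 2 = n + s - 1 by ring, show (n : ℤ) + 1 + s - 1 = n + s by ring]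
      at hXsucc hBsucc ⊢
    rw [hXsucc, hBsucc]
    linear_combination (-a ((n : ℤ) + 1)) * ih

theorem periodic_continuant_telescoping_general
    (a b : ℤ → ℤ)
    (d : ℕ)
    (hpa : ∀ ν : ℤ, 1 ≤ ν → a (ν + d) = a ν) (hpb : ∀ ν : ℤ, 1 ≤ ν → b (ν + d) = b ν)
    (A B : ℤ → ℤ → ℤ)
    (hBm1 : ∀ l : ℤ, 0 ≤ l → B (-1) l = 0) (hB0 : ∀ l : ℤ, 0 ≤ l → B 0 l = 1)
    (hArec : ∀ l ν : ℤ, 0 ≤ l → 1 ≤ ν →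
      A ν l = b (l + ν) * A (ν - 1) l + a (l + ν) * A (ν - 2) l)
    (hBrec : ∀ l ν : ℤ, 0 ≤ l → 1 ≤ ν →
      B ν l = b (l + ν) * B (ν - 1) l + a (l + ν) * B (ν - 2) l) :
    ∀ lam nu : ℕ, nu ≤ lam → (d : ℤ) ∣ ((lam : ℤ) - nu) →
      A ((lam : ℤ) - 1) 0 * B (nu : ℤ) 0 - A (lam : ℤ) 0 * B ((nu : ℤ) - 1) 0 =
        (-1 : ℤ) ^ nu * (∏ i ∈ Finset.range nu, a ((lam : ℤ) - i)) *
          A ((lam : ℤ) - nu - 1) 0 ∧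
      B ((lam : ℤ) - 1) 0 * B (nu : ℤ) 0 - B (lam : ℤ) 0 * B ((nu : ℤ) - 1) 0 =
        (-1 : ℤ) ^ nu * (∏ i ∈ Finset.range nu, a ((lam : ℤ) - i)) *
          B ((lam : ℤ) - nu - 1) 0 := by
  intro lam nu hle hdvd
  obtain ⟨s, rfl⟩ := Nat.exists_eq_add_of_le hle
  obtain ⟨k, rfl⟩ : d ∣ s := Int.natCast_dvd_natCast.mp (by push_cast at hdvd; simpa using hdvd)
  have key X hX := continuant_shift_telescoping a b X (B · 0) hX
    (fun ν hν => by simpa using hBrec 0 ν le_rfl hν) (hB0 0 le_rfl) (hBm1 0 le_rfl) (d * k)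
    (apply_add_mul_eq_of_periodic hpa k) (apply_add_mul_eq_of_periodic hpb k) nu
  push_cast
  simp only [show ∀ m : ℤ, (nu : ℤ) + m - nu - 1 = m - 1 from fun m => by ring]
  exact ⟨key (A · 0) fun ν hν => by simpa using hArec 0 ν le_rfl hν,
    key (B · 0) fun ν hν => by simpa using hBrec 0 ν le_rfl hν⟩

/-- Telescoping-sum identity for periodic continuants. -/
theorem periodic_continuant_telescoping
    (a b : ℤ → ℤ)
    (ha : ∀ ν : ℤ, 1 ≤ ν → 0 < a ν) (hb : ∀ ν : ℤ, 0 ≤ ν → 0 < b ν)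
    (d : ℕ) (hd : 1 ≤ d)
    (hpa : ∀ ν : ℤ, 1 ≤ ν → a (ν + d) = a ν) (hpb : ∀ ν : ℤ, 1 ≤ ν → b (ν + d) = b ν)
    (A B : ℤ → ℤ → ℤ)
    (hAm1 : ∀ l : ℤ, 0 ≤ l → A (-1) l = 1) (hA0 : ∀ l : ℤ, 0 ≤ l → A 0 l = b l)
    (hBm1 : ∀ l : ℤ, 0 ≤ l → B (-1) l = 0) (hB0 : ∀ l : ℤ, 0 ≤ l → B 0 l = 1)
    (hArec : ∀ l ν : ℤ, 0 ≤ l → 1 ≤ ν →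
      A ν l = b (l + ν) * A (ν - 1) l + a (l + ν) * A (ν - 2) l)
    (hBrec : ∀ l ν : ℤ, 0 ≤ l → 1 ≤ ν →
      B ν l = b (l + ν) * B (ν - 1) l + a (l + ν) * B (ν - 2) l) :
    ∀ lam nu : ℕ, nu ≤ lam → (d : ℤ) ∣ ((lam : ℤ) - nu) →
      A ((lam : ℤ) - 1) 0 * B (nu : ℤ) 0 - A (lam : ℤ) 0 * B ((nu : ℤ) - 1) 0 =
        (-1 : ℤ) ^ nu * (∏ i ∈ Finset.range nu, a ((lam : ℤ) - i)) *
          A ((lam : ℤ) - nu - 1) 0 ∧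
      B ((lam : ℤ) - 1) 0 * B (nu : ℤ) 0 - B (lam : ℤ) 0 * B ((nu : ℤ) - 1) 0 =
        (-1 : ℤ) ^ nu * (∏ i ∈ Finset.range nu, a ((lam : ℤ) - i)) *
          B ((lam : ℤ) - nu - 1) 0 :=
  periodic_continuant_telescoping_general a b d hpa hpb A B hBm1 hB0 hArec hBrec
end

section
/- The integer B_{d−1} divides B_{2d−1}, and for every integer ν ≥ −1 one has B_{d−1} · B_{ν+2d} = B_{2d−1} · B_{ν+d} + (−1)^{d−1} · (a_1·a_2⋯a_d) · B_{d−1} · B_ν; equivalently, B_{ν+2d} = C_d · B_{ν+d} + D_d · B_ν where C_d = B_{2d−1}/B_{d−1} and D_d = (−1)^{d−1}·a_1·a_2⋯a_d. -/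
/-!
Write `u n = B (n - 1)`, a solution of `u (n + 2) = β n * u (n + 1) + α n * u n` with
`α n = a (n + 1)`, `β n = b (n + 1)`. By periodicity, shifting by `d` is a linear operator `S` on
the two-dimensional space of solutions. In the basis of the solutions starting `(1, 0)` and
`(0, 1)` its trace is `monodromyTrace` and its determinant is the Casoratian of the basis at `d`, which
is `∏ i < d, -α i`. Cayley–Hamilton, `S² = T S - det S`, is the period recurrence; at `n = 0` it
gives `u (2d) = T * u d`, whence the divisibility and `T = B (2d - 1) / B (d - 1)`.
-/

open Finset Function

namespace ThreeTermRecurrence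

variable {R : Type*} [CommRing R] (α β : ℕ → R)

def solutions : Submodule R (ℕ → R) where
  carrier := {x | ∀ n, x (n + 2) = β n * x (n + 1) + α n * x n}
  add_mem' {x y} hx hy n := by
    simp only [Pi.add_apply, hx n, hy n]
    ring
  zero_mem' n := by simp
  smul_mem' c x hx n := by
    simp only [Pi.smul_apply, smul_eq_mul, hx n]
    ring

def solution (x₀ x₁ : R) : ℕ → R
  | 0 => x₀
  | 1 => x₁
  | n + 2 => β n * solution x₀ x₁ (n + 1) + α n * solution x₀ x₁ n

/-- The trace of the shift by `d` on `solutions α β`, in the basis `solution α β 1 0`,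
`solution α β 0 1`. -/
def monodromyTrace (d : ℕ) : R := solution α β 1 0 d + solution α β 0 1 (d + 1)

def casoratian (x y : ℕ → R) (n : ℕ) : R := x n * y (n + 1) - x (n + 1) * y n

variable {α β}

theorem solution_mem_solutions (x₀ x₁ : R) : solution α β x₀ x₁ ∈ solutions α β :=
  fun _ ↦ rfl

theorem solutions_ext {x y : ℕ → R} (hx : x ∈ solutions α β) (hy : y ∈ solutions α β)
    (h₀ : x 0 = y 0) (h₁ : x 1 = y 1) : x = y := by
  funext n
  induction n using Nat.twoStepInduction with
  | zero => exact h₀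
  | one => exact h₁
  | more n ih₀ ih₁ => rw [hx n, hy n, ih₀, ih₁]

theorem apply_eq_of_mem_solutions {x : ℕ → R} (hx : x ∈ solutions α β) (n : ℕ) :
    x n = x 0 * solution α β 1 0 n + x 1 * solution α β 0 1 n := by
  have hbasis : x = x 0 • solution α β 1 0 + x 1 • solution α β 0 1 :=
    solutions_ext hx
      (add_mem (Submodule.smul_mem _ _ (solution_mem_solutions 1 0))
        (Submodule.smul_mem _ _ (solution_mem_solutions 0 1)))
      (by simp [solution]) (by simp [solution])
  simpa using congrFun hbasis n

theorem shift_mem_solutions {d : ℕ} (hα : Periodic α d) (hβ : Periodic β d) {x : ℕ → R}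
    (hx : x ∈ solutions α β) : (fun n ↦ x (n + d)) ∈ solutions α β := fun n ↦ by
  simpa only [Nat.add_right_comm _ 2 d, Nat.add_right_comm _ 1 d, hα n, hβ n] using hx (n + d)

theorem casoratian_succ {x y : ℕ → R} (hx : x ∈ solutions α β) (hy : y ∈ solutions α β)
    (n : ℕ) : casoratian x y (n + 1) = -α n * casoratian x y n := by
  simp only [casoratian, hx n, hy n]
  ring

theorem casoratian_eq_prod {x y : ℕ → R} (hx : x ∈ solutions α β) (hy : y ∈ solutions α β)
    (n : ℕ) : casoratian x y n = (∏ i ∈ range n, -α i) * casoratian x y 0 := by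
  induction n with
  | zero => simp
  | succ n ih =>
    rw [prod_range_succ, casoratian_succ hx hy, ih]
    ring

theorem casoratian_solution_basis (n : ℕ) :
    casoratian (solution α β 1 0) (solution α β 0 1) n = ∏ i ∈ range n, -α i := by
  rw [casoratian_eq_prod (solution_mem_solutions 1 0) (solution_mem_solutions 0 1)]
  simp [casoratian, solution]

theorem apply_add_two_mul_period {d : ℕ} (hα : Periodic α d) (hβ : Periodic β d) {x : ℕ → R}
    (hx : x ∈ solutions α β) (n : ℕ) :
    x (n + 2 * d) = monodromyTrace α β d * x (n + d) - (∏ i ∈ range d, -α i) * x n := by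
  set A := solution α β 1 0
  set U := solution α β 0 1
  set T := monodromyTrace α β d
  set W := ∏ i ∈ range d, -α i
  have hx₁ := shift_mem_solutions hα hβ hx
  have hx₂ := shift_mem_solutions hα hβ hx₁
  have hW : A d * U (d + 1) - A (d + 1) * U d = W := casoratian_solution_basis d
  have hd₀ := apply_eq_of_mem_solutions hx d
  have hd₁ := apply_eq_of_mem_solutions hx (d + 1)
  have h2d₀ := apply_eq_of_mem_solutions hx₁ d
  have h2d₁ := apply_eq_of_mem_solutions hx₁ (d + 1)
  simp only [zero_add, Nat.add_comm 1 d] at hd₀ hd₁ h2d₀ h2d₁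
  have hzero : (fun n ↦ x (n + d + d)) - T • (fun n ↦ x (n + d)) + W • x = 0 :=
    solutions_ext (add_mem (sub_mem hx₂ (Submodule.smul_mem _ T hx₁))
      (Submodule.smul_mem _ W hx)) (zero_mem _)
      (by
        simp only [Pi.add_apply, Pi.sub_apply, Pi.smul_apply, smul_eq_mul, zero_add,
          Pi.zero_apply, T, monodromyTrace]
        linear_combination h2d₀ - U (d + 1) * hd₀ + U d * hd₁ - x 0 * hW)
      (by
        simp only [Pi.add_apply, Pi.sub_apply, Pi.smul_apply, smul_eq_mul, Pi.zero_apply,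
          Nat.add_comm 1 d, T, monodromyTrace]
        linear_combination h2d₁ + A (d + 1) * hd₀ - A d * hd₁ - x 1 * hW)
  have := congrFun hzero n
  simp only [Pi.add_apply, Pi.sub_apply, Pi.smul_apply, smul_eq_mul, Pi.zero_apply] at this
  rw [two_mul, ← add_assoc]
  linear_combination this

theorem pos_of_mem_solutions [LinearOrder R] [IsStrictOrderedRing R] {x : ℕ → R}
    (hα : ∀ n, 0 ≤ α n) (hβ : ∀ n, 0 < β n) (hx : x ∈ solutions α β) (h₀ : 0 ≤ x 0)
    (h₁ : 0 < x 1) (n : ℕ) : 0 < x (n + 1) := by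
  suffices ∀ n, 0 ≤ x n ∧ 0 < x (n + 1) from (this n).2
  intro n
  induction n with
  | zero => exact ⟨h₀, h₁⟩
  | succ n ih =>
    refine ⟨ih.2.le, ?_⟩
    rw [hx n]
    exact add_pos_of_pos_of_nonneg (mul_pos (hβ n) ih.2) (mul_nonneg (hα n) ih.1)

theorem periodic_comp_natCast_add_one {M : Type*} {a : ℤ → M} {d : ℕ}
    (hpa : ∀ ν : ℤ, 1 ≤ ν → a (ν + d) = a ν) : Periodic (fun n : ℕ ↦ a (n + 1)) d :=
  fun n ↦ by simpa [add_right_comm] using hpa (n + 1) (by omega)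

theorem comp_natCast_sub_one_mem_solutions {a b B : ℤ → R}
    (hBrec : ∀ ν : ℤ, 1 ≤ ν → B ν = b ν * B (ν - 1) + a ν * B (ν - 2)) :
    (fun n : ℕ ↦ B (n - 1)) ∈ solutions (fun n ↦ a (n + 1)) (fun n ↦ b (n + 1)) := fun n ↦ by
  have h := hBrec (n + 1) (by omega)
  rw [add_sub_cancel_right, show (n : ℤ) + 1 - 2 = n - 1 by ring] at h
  simpa [show (n : ℤ) + 2 - 1 = n + 1 by ring] using h

end ThreeTermRecurrence

open ThreeTermRecurrence in
/-- A second-order recurrence of period length `d` for the periodic continuant denominators. -/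
theorem single_recurrence
    (d : ℕ) (hd : 1 ≤ d) (a b : ℤ → ℤ)
    (ha : ∀ ν : ℤ, 1 ≤ ν → 0 < a ν) (hb : ∀ ν : ℤ, 1 ≤ ν → 0 < b ν)
    (hpa : ∀ ν : ℤ, 1 ≤ ν → a (ν + d) = a ν) (hpb : ∀ ν : ℤ, 1 ≤ ν → b (ν + d) = b ν)
    (B : ℤ → ℤ) (hBm1 : B (-1) = 0) (hB0 : B 0 = 1)
    (hBrec : ∀ ν : ℤ, 1 ≤ ν → B ν = b ν * B (ν - 1) + a ν * B (ν - 2)) :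
    B ((d : ℤ) - 1) ∣ B (2 * (d : ℤ) - 1) ∧
    (∀ ν : ℤ, -1 ≤ ν →
      B ((d : ℤ) - 1) * B (ν + 2 * d) =
        B (2 * (d : ℤ) - 1) * B (ν + d) +
          (-1 : ℤ) ^ (d - 1) * (∏ i ∈ Finset.range d, a ((i : ℤ) + 1)) *
            B ((d : ℤ) - 1) * B ν) ∧
    (∀ ν : ℤ, -1 ≤ ν →
      B (ν + 2 * d) =
        (B (2 * (d : ℤ) - 1) / B ((d : ℤ) - 1)) * B (ν + d) +
          ((-1 : ℤ) ^ (d - 1) * ∏ i ∈ Finset.range d, a ((i : ℤ) + 1)) * B ν) := by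
  set α : ℕ → ℤ := fun n ↦ a (n + 1)
  set β : ℕ → ℤ := fun n ↦ b (n + 1)
  set u : ℕ → ℤ := fun n ↦ B (n - 1)
  have hu : u ∈ solutions α β := comp_natCast_sub_one_mem_solutions hBrec
  have hrec := apply_add_two_mul_period (periodic_comp_natCast_add_one hpa)
    (periodic_comp_natCast_add_one hpb) hu
  set T := monodromyTrace α β d
  have hsign : -∏ i ∈ range d, -α i = (-1) ^ (d - 1) * ∏ i ∈ range d, α i := by
    obtain ⟨e, rfl⟩ : ∃ e, d = e + 1 := ⟨d - 1, by omega⟩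
    simp [prod_neg, pow_succ]
  have hfactor : B (2 * d - 1) = B (d - 1) * T := by
    simpa [u, hBm1, mul_comm] using hrec 0
  have hpos : 0 < B (d - 1) := by
    obtain ⟨e, rfl⟩ : ∃ e, d = e + 1 := ⟨d - 1, by omega⟩
    simpa [u] using pos_of_mem_solutions (fun n ↦ (ha _ (by omega)).le) (fun n ↦ hb _ (by omega))
      hu (by simp [u, hBm1]) (by simp [u, hB0]) e
  have hperiod : ∀ ν : ℤ, -1 ≤ ν →
      B (ν + 2 * d) = T * B (ν + d) + (-1) ^ (d - 1) * (∏ i ∈ range d, α i) * B ν := by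
    intro ν hν
    obtain ⟨n, rfl⟩ : ∃ n : ℕ, ν = n - 1 := ⟨(ν + 1).toNat, by omega⟩
    have := hrec n
    simp only [u, Nat.cast_add, Nat.cast_mul, Nat.cast_ofNat] at this
    rw [show (n : ℤ) + 2 * d - 1 = n - 1 + 2 * d by ring,
      show (n : ℤ) + d - 1 = n - 1 + d by ring] at this
    rw [this, ← hsign]
    ring
  refine ⟨⟨T, hfactor⟩, fun ν hν ↦ ?_, fun ν hν ↦ ?_⟩
  · rw [hfactor, hperiod ν hν]
    ring
  · rw [hfactor, Int.mul_ediv_cancel_left _ hpos.ne', hperiod ν hν]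
end

section
/- For every integer n ≥ 1, as real numbers, B_{(n+1)d−1} = ( C_d·B_{nd−1} + √( Δ·B_{nd−1}² + 4·(−D_d)^n·B_{d−1}² ) ) / 2; in particular the quantity under the square root, Δ·B_{nd−1}² + 4·(−D_d)^n·B_{d−1}², is nonnegative. -/
/-!
Let `P`, `Q` be the solutions of the recurrence with values `(0, 1)` and `(1, 0)` at
`ν = -1, 0`. By periodicity, `B_{md+k-1} = B_{md} P_k + B_{md-1} Q_k`; taking `k = d, d + 1`
shows that `x_m = B_{md-1}` satisfies `x_{m+2} = C x_{m+1} + D x_m`, where `C = P_{d+1} + Q_d`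
and `D = Q_{d+1} P_d - P_{d+1} Q_d` are the trace and minus the determinant of the monodromy
matrix; `x_2 = C x_1` identifies `C` with `C_d`, and the Wronskian identifies `D` with `D_d`.
The conserved quantity `x_{m+1}² - C x_{m+1} x_m - D x_m² = (-D)^m x_1²` turns into
`(2 x_{m+1} - C x_m)² = Δ x_m² + 4 (-D)^m x_1²`. Finally `Δ = (P_{d+1} - Q_d)² + 4 P_d Q_{d+1} ≥ 0`,
so `X² - C X - D` has real roots `α ≥ |β|`, and `2 x_{m+1} - C x_m = (α^m + β^m) x_1 ≥ 0`.
-/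

open Finset

section ThreeTermSol

variable {R : Type*} [CommRing R] (a b : ℤ → R)

/-- The solution of `y ν = b ν * y (ν - 1) + a ν * y (ν - 2)` with `y (-1) = x` and `y 0 = y₀`;
`threeTermSol a b x y₀ k` is its value at `ν = k - 1`. -/
def threeTermSol (x y₀ : R) : ℕ → R
  | 0 => x
  | 1 => y₀
  | k + 2 => b (k + 1) * threeTermSol x y₀ (k + 1) + a (k + 1) * threeTermSol x y₀ k

@[simp] lemma threeTermSol_zero (x y₀ : R) : threeTermSol a b x y₀ 0 = x := rfl

@[simp] lemma threeTermSol_one (x y₀ : R) : threeTermSol a b x y₀ 1 = y₀ := rfl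

lemma threeTermSol_add_two (x y₀ : R) (k : ℕ) :
    threeTermSol a b x y₀ (k + 2) =
      b (k + 1) * threeTermSol a b x y₀ (k + 1) + a (k + 1) * threeTermSol a b x y₀ k :=
  rfl

lemma threeTermSol_eq_add (x y₀ : R) (k : ℕ) :
    threeTermSol a b x y₀ k = y₀ * threeTermSol a b 0 1 k + x * threeTermSol a b 1 0 k := by
  induction k using Nat.twoStepInduction with
  | zero => simp
  | one => simp
  | more k ih₀ ih₁ => simp only [threeTermSol_add_two, ih₀, ih₁]; ring

lemma threeTermSol_wronskian (k : ℕ) :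
    threeTermSol a b 0 1 (k + 1) * threeTermSol a b 1 0 k -
        threeTermSol a b 1 0 (k + 1) * threeTermSol a b 0 1 k =
      (-1) ^ k * ∏ i ∈ range k, a (i + 1) := by
  induction k with
  | zero => simp
  | succ k ih =>
    rw [prod_range_succ, threeTermSol_add_two, threeTermSol_add_two, pow_succ]
    linear_combination -a (k + 1) * ih

lemma neg_one_pow_pred_mul_prod_eq {k : ℕ} (hk : k ≠ 0) :
    (-1) ^ (k - 1) * ∏ i ∈ range k, a (i + 1) =
      threeTermSol a b 1 0 (k + 1) * threeTermSol a b 0 1 k -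
        threeTermSol a b 0 1 (k + 1) * threeTermSol a b 1 0 k := by
  have hsign : (-1 : R) ^ k = -(-1) ^ (k - 1) := by rw [← pow_sub_one_mul hk, mul_neg_one]
  linear_combination threeTermSol_wronskian a b k + (∏ i ∈ range k, a (i + 1)) * hsign

variable {a b}

lemma eq_threeTermSol {B : ℤ → R} {s : ℤ}
    (hB : ∀ ν : ℤ, 1 ≤ ν → B (s + ν) = b ν * B (s + ν - 1) + a ν * B (s + ν - 2)) (k : ℕ) :
    B (s + k - 1) = threeTermSol a b (B (s - 1)) (B s) k := by
  induction k using Nat.twoStepInduction with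
  | zero => simp
  | one => simp
  | more k ih₀ ih₁ =>
    rw [threeTermSol_add_two, ← ih₀, ← ih₁]
    convert hB (k + 1) (by omega) using 3 <;> push_cast <;> ring_nf

lemma threeTermSol_nonneg [LinearOrder R] [IsStrictOrderedRing R]
    (ha : ∀ ν : ℤ, 1 ≤ ν → 0 ≤ a ν) (hb : ∀ ν : ℤ, 1 ≤ ν → 0 ≤ b ν)
    {x y₀ : R} (hx : 0 ≤ x) (hy₀ : 0 ≤ y₀) (k : ℕ) : 0 ≤ threeTermSol a b x y₀ k := by
  induction k using Nat.twoStepInduction with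
  | zero => exact hx
  | one => exact hy₀
  | more k ih₀ ih₁ =>
    rw [threeTermSol_add_two]
    have := ha (k + 1) (by omega)
    have := hb (k + 1) (by omega)
    positivity

lemma threeTermSol_zero_one_pos [LinearOrder R] [IsStrictOrderedRing R]
    (ha : ∀ ν : ℤ, 1 ≤ ν → 0 ≤ a ν) (hb : ∀ ν : ℤ, 1 ≤ ν → 0 < b ν) (k : ℕ) :
    0 < threeTermSol a b 0 1 (k + 1) := by
  induction k with
  | zero => simp
  | succ k ih =>
    rw [threeTermSol_add_two]
    have := ha (k + 1) (by omega)
    have := hb (k + 1) (by omega)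
    have := threeTermSol_nonneg ha (fun ν hν => (hb ν hν).le) le_rfl zero_le_one k
    positivity

lemma threeTermSol_discr_nonneg [LinearOrder R] [IsStrictOrderedRing R]
    (ha : ∀ ν : ℤ, 1 ≤ ν → 0 ≤ a ν) (hb : ∀ ν : ℤ, 1 ≤ ν → 0 ≤ b ν) (k : ℕ) :
    0 ≤ (threeTermSol a b 0 1 (k + 1) + threeTermSol a b 1 0 k) ^ 2 +
      4 * (threeTermSol a b 1 0 (k + 1) * threeTermSol a b 0 1 k -
        threeTermSol a b 0 1 (k + 1) * threeTermSol a b 1 0 k) := by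
  have hP := threeTermSol_nonneg ha hb le_rfl zero_le_one k
  have hQ := threeTermSol_nonneg ha hb zero_le_one le_rfl (k + 1)
  nlinarith [sq_nonneg (threeTermSol a b 0 1 (k + 1) - threeTermSol a b 1 0 k), mul_nonneg hQ hP]

end ThreeTermSol

section TwoStep

variable {R : Type*} [CommRing R]

lemma two_step_of_coupled {x u : ℕ → R} {p q p' q' : R}
    (hx : ∀ m, x (m + 1) = p * u m + q * x m) (hu : ∀ m, u (m + 1) = p' * u m + q' * x m)
    (m : ℕ) : x (m + 2) = (p' + q) * x (m + 1) + (q' * p - p' * q) * x m := by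
  linear_combination hx (m + 1) + p * hu m - p' * hx m

lemma two_step_quadratic_invariant {x : ℕ → R} {C D : R}
    (hx : ∀ m, x (m + 2) = C * x (m + 1) + D * x m) (m : ℕ) :
    x (m + 1) ^ 2 - C * x (m + 1) * x m - D * x m ^ 2 =
      (-D) ^ m * (x 1 ^ 2 - C * x 1 * x 0 - D * x 0 ^ 2) := by
  induction m with
  | zero => ring
  | succ m ih => rw [hx m, pow_succ]; linear_combination -D * ih

lemma succ_sub_mul_eq_pow_mul {x : ℕ → R} {α β : R}
    (hx : ∀ m, x (m + 2) = (α + β) * x (m + 1) - α * β * x m) (m : ℕ) :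
    x (m + 1) - β * x m = α ^ m * (x 1 - β * x 0) := by
  induction m with
  | zero => ring
  | succ m ih => rw [hx m, pow_succ]; linear_combination α * ih

end TwoStep

lemma two_mul_succ_sub_nonneg {R : Type*} [CommRing R] [LinearOrder R] [IsStrictOrderedRing R]
    {x : ℕ → R} {α β : R} (hαβ : |β| ≤ α)
    (hx : ∀ m, x (m + 2) = (α + β) * x (m + 1) - α * β * x m) (hx₀ : x 0 = 0) (hx₁ : 0 ≤ x 1)
    (m : ℕ) : 0 ≤ 2 * x (m + 1) - (α + β) * x m := by
  have hα := succ_sub_mul_eq_pow_mul hx m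
  have hβ := succ_sub_mul_eq_pow_mul (x := x) (α := β) (β := α) (fun m => by rw [hx m]; ring) m
  rw [hx₀, mul_zero, sub_zero] at hα hβ
  have hpow : |β ^ m| ≤ α ^ m := by
    rw [abs_pow]; exact pow_le_pow_left₀ (abs_nonneg β) hαβ m
  have : 0 ≤ (α ^ m + β ^ m) * x 1 :=
    mul_nonneg (by linarith [neg_abs_le (β ^ m)]) hx₁
  linear_combination this - hα - hβ

lemma apply_add_mul_of_periodic {α : Type*} {f : ℤ → α} {d : ℕ}
    (hf : ∀ ν : ℤ, 1 ≤ ν → f (ν + d) = f ν) (m : ℕ) {ν : ℤ} (hν : 1 ≤ ν) :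
    f (ν + m * d) = f ν := by
  induction m with
  | zero => simp
  | succ m ih =>
    have : (0 : ℤ) ≤ m * d := by positivity
    rw [← ih, Nat.cast_succ, add_one_mul, ← add_assoc]
    exact hf _ (by linarith)

section Periodic

variable {R : Type*} [CommRing R] {d : ℕ} {a b B : ℤ → R}
  (hpa : ∀ ν : ℤ, 1 ≤ ν → a (ν + d) = a ν) (hpb : ∀ ν : ℤ, 1 ≤ ν → b (ν + d) = b ν)
  (hB : ∀ ν : ℤ, 1 ≤ ν → B ν = b ν * B (ν - 1) + a ν * B (ν - 2))
include hpa hpb hB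

lemma eq_threeTermSol_of_periodic (m k : ℕ) :
    B (m * d + k - 1) =
      B (m * d) * threeTermSol a b 0 1 k + B (m * d - 1) * threeTermSol a b 1 0 k := by
  rw [← threeTermSol_eq_add]
  refine eq_threeTermSol (fun ν hν => ?_) k
  have : (0 : ℤ) ≤ m * d := by positivity
  rw [← apply_add_mul_of_periodic hpa m hν, ← apply_add_mul_of_periodic hpb m hν,
    hB _ (by linarith)]
  ring_nf

lemma block_two_step_of_periodic (m : ℕ) :
    B ((m + 2 : ℕ) * d - 1) =
      (threeTermSol a b 0 1 (d + 1) + threeTermSol a b 1 0 d) * B ((m + 1 : ℕ) * d - 1) +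
        (threeTermSol a b 1 0 (d + 1) * threeTermSol a b 0 1 d -
          threeTermSol a b 0 1 (d + 1) * threeTermSol a b 1 0 d) * B (m * d - 1) := by
  refine two_step_of_coupled (x := fun m : ℕ => B (m * d - 1)) (u := fun m : ℕ => B (m * d))
    (fun m => ?_) (fun m => ?_) m
  · rw [show ((m + 1 : ℕ) : ℤ) * d - 1 = m * d + d - 1 by push_cast; ring,
      eq_threeTermSol_of_periodic hpa hpb hB]
    ring
  · rw [show ((m + 1 : ℕ) : ℤ) * d = m * d + (d + 1 : ℕ) - 1 by push_cast; ring,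
      eq_threeTermSol_of_periodic hpa hpb hB]
    ring

end Periodic

theorem succ_eq_half_add_sqrt {x : ℕ → ℝ} {C D : ℝ} (hC : 0 ≤ C) (hΔ : 0 ≤ C ^ 2 + 4 * D)
    (hx : ∀ m, x (m + 2) = C * x (m + 1) + D * x m) (hx₀ : x 0 = 0) (hx₁ : 0 ≤ x 1) (n : ℕ) :
    0 ≤ (C ^ 2 + 4 * D) * x n ^ 2 + 4 * (-D) ^ n * x 1 ^ 2 ∧
      x (n + 1) = (C * x n + √((C ^ 2 + 4 * D) * x n ^ 2 + 4 * (-D) ^ n * x 1 ^ 2)) / 2 := by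
  set s := √(C ^ 2 + 4 * D)
  have hs : s ^ 2 = C ^ 2 + 4 * D := Real.sq_sqrt hΔ
  have hαβ : |(C - s) / 2| ≤ (C + s) / 2 :=
    abs_le.2 ⟨by linarith, by linarith [Real.sqrt_nonneg (C ^ 2 + 4 * D)]⟩
  have ht : 0 ≤ 2 * x (n + 1) - C * x n := by
    have := two_mul_succ_sub_nonneg hαβ
      (fun m => by linear_combination hx m - x m / 4 * hs) hx₀ hx₁ n
    linarith
  have hsq : (C ^ 2 + 4 * D) * x n ^ 2 + 4 * (-D) ^ n * x 1 ^ 2 =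
      (2 * x (n + 1) - C * x n) ^ 2 := by
    have hinv := two_step_quadratic_invariant hx n
    rw [hx₀] at hinv
    linear_combination (-4) * hinv
  rw [hsq, Real.sqrt_sq ht]
  exact ⟨sq_nonneg _, by ring⟩

/-- Quadratic (square-root) formula for `B_{(n+1)d-1}` in terms of `B_{nd-1}`. -/
theorem sqrt_formula
    (d : ℕ) (hd : 1 ≤ d) (a b : ℤ → ℤ)
    (ha : ∀ ν : ℤ, 1 ≤ ν → 0 < a ν) (hb : ∀ ν : ℤ, 1 ≤ ν → 0 < b ν)
    (hpa : ∀ ν : ℤ, 1 ≤ ν → a (ν + d) = a ν) (hpb : ∀ ν : ℤ, 1 ≤ ν → b (ν + d) = b ν)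
    (B : ℤ → ℤ) (hBm1 : B (-1) = 0) (hB0 : B 0 = 1)
    (hBrec : ∀ ν : ℤ, 1 ≤ ν → B ν = b ν * B (ν - 1) + a ν * B (ν - 2))
    (Cd Dd Δ : ℤ)
    (hC : B ((d : ℤ) - 1) * Cd = B (2 * (d : ℤ) - 1))
    (hD : Dd = (-1 : ℤ) ^ (d - 1) * ∏ i ∈ Finset.range d, a ((i : ℤ) + 1))
    (hΔ : Δ = Cd ^ 2 + 4 * Dd) :
    ∀ n : ℕ, 1 ≤ n →
      0 ≤ (Δ : ℝ) * (B ((n : ℤ) * d - 1) : ℝ) ^ 2 +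
        4 * (-(Dd : ℝ)) ^ n * (B ((d : ℤ) - 1) : ℝ) ^ 2 ∧
      (B (((n : ℤ) + 1) * d - 1) : ℝ) =
        ((Cd : ℝ) * (B ((n : ℤ) * d - 1) : ℝ) +
          Real.sqrt ((Δ : ℝ) * (B ((n : ℤ) * d - 1) : ℝ) ^ 2 +
            4 * (-(Dd : ℝ)) ^ n * (B ((d : ℤ) - 1) : ℝ) ^ 2)) / 2 := by
  have ha₀ : ∀ ν : ℤ, 1 ≤ ν → 0 ≤ a ν := fun ν hν => (ha ν hν).le
  have hb₀ : ∀ ν : ℤ, 1 ≤ ν → 0 ≤ b ν := fun ν hν => (hb ν hν).le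
  have hBd : B (d - 1) = threeTermSol a b 0 1 d := by
    simpa [hBm1, hB0] using eq_threeTermSol_of_periodic hpa hpb hBrec 0 d
  have hPd : 0 < threeTermSol a b 0 1 d := by
    obtain ⟨e, rfl⟩ := Nat.exists_eq_add_of_le' hd
    exact threeTermSol_zero_one_pos ha₀ hb e
  have hrec := block_two_step_of_periodic hpa hpb hBrec
  have hCd : Cd = threeTermSol a b 0 1 (d + 1) + threeTermSol a b 1 0 d := by
    refine mul_left_cancel₀ hPd.ne' ?_
    have h : B (2 * d - 1) =
        (threeTermSol a b 0 1 (d + 1) + threeTermSol a b 1 0 d) * B (d - 1) := by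
      simpa [hBm1] using hrec 0
    rw [← hBd, hC, h]
    ring
  have hDd : Dd = threeTermSol a b 1 0 (d + 1) * threeTermSol a b 0 1 d -
      threeTermSol a b 0 1 (d + 1) * threeTermSol a b 1 0 d :=
    hD.trans (neg_one_pow_pred_mul_prod_eq a b (by omega))
  have hC₀ : 0 ≤ Cd := hCd ▸ add_nonneg (threeTermSol_nonneg ha₀ hb₀ le_rfl zero_le_one _)
    (threeTermSol_nonneg ha₀ hb₀ zero_le_one le_rfl _)
  have hΔ₀ : 0 ≤ Cd ^ 2 + 4 * Dd := hCd ▸ hDd ▸ threeTermSol_discr_nonneg ha₀ hb₀ d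
  rw [← hCd, ← hDd] at hrec
  intro n _
  have h := succ_eq_half_add_sqrt (x := fun m : ℕ => (B (m * d - 1) : ℝ)) (C := Cd) (D := Dd)
    (by exact_mod_cast hC₀) (by exact_mod_cast hΔ₀) (fun m => by exact_mod_cast hrec m)
    (by simp [hBm1]) (by simpa [hBd] using hPd.le) n
  have hΔR : (Δ : ℝ) = Cd ^ 2 + 4 * Dd := by exact_mod_cast hΔ
  simpa [hΔR] using h
end

section
/- In the ring of formal power series ℤ⟦X⟧, one has (1 − C_d·X^d − D_d·X^{2d}) · (∑_{n≥0} B_n·X^n) = ∑_{n=0}^{2d−1} B_n·X^n − C_d·∑_{n=0}^{d−1} B_n·X^{n+d}. -/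
/-!
With `M ν = !![b ν, a ν; 1, 0]`, the product `Q n = M n * ⋯ * M 1` has first column
`(B n, B (n - 1))`. Periodicity gives `Q (n + d) = Q n * Q d`, and Cayley–Hamilton for the
`2 × 2` matrix `Q d` turns this into `Q (n + 2d) = tr (Q d) • Q (n + d) - det (Q d) • Q n`.
Reading off the first column, `B (n + 2d) = C_d B (n + d) + D_d B n`: the trace is `C_d`
because `B (d - 1) > 0`, and `-det (Q d) = D_d`. A lacunary recurrence of this kind is
equivalent to the generating function times `1 - C_d X^d - D_d X^{2d}` being a polynomial
of degree `< 2d`.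
-/

open Finset Matrix PowerSeries

namespace PowerSeries

variable {R : Type*} [CommRing R]

lemma coe_trunc_mk (n : ℕ) (f : ℕ → R) :
    (trunc n (mk f) : R⟦X⟧) = ∑ i ∈ range n, C (f i) * X ^ i := by
  rw [trunc_apply, Nat.Ico_zero_eq_range, ← Polynomial.coeToPowerSeries.ringHom_apply, map_sum]
  simp [Polynomial.coe_monomial, monomial_eq_C_mul_X_pow]

lemma mul_mk_eq_of_lacunary_recurrence {d : ℕ} {f : ℕ → R} {c e : R}
    (h : ∀ n, f (n + 2 * d) = c * f (n + d) + e * f n) :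
    (1 - C c * X ^ d - C e * X ^ (2 * d)) * mk f =
      (trunc (2 * d) (mk f) : R⟦X⟧) - C c * X ^ d * (trunc d (mk f) : R⟦X⟧) := by
  have split₁ := eq_X_pow_mul_shift_add_trunc d (mk f)
  have split₂ := eq_X_pow_mul_shift_add_trunc (2 * d) (mk f)
  have shift_rec : (mk fun i ↦ f (i + 2 * d)) = C c * mk (fun i ↦ f (i + d)) + C e * mk f := by
    ext n
    simp [h]
  simp only [coeff_mk] at split₁ split₂
  rw [shift_rec] at split₂
  linear_combination split₂ - C c * X ^ d * split₁

end PowerSeries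

lemma Matrix.sq_eq_trace_smul_sub_det_smul_one {R : Type*} [CommRing R]
    (A : Matrix (Fin 2) (Fin 2) R) : A ^ 2 = A.trace • A - A.det • 1 := by
  ext i j
  fin_cases i <;> fin_cases j <;>
    simp [sq, Matrix.mul_apply, trace_fin_two, det_fin_two] <;> ring

section Continuant

variable {R : Type*} [CommRing R] (a b : ℤ → R)

def continuantStep (ν : ℤ) : Matrix (Fin 2) (Fin 2) R := !![b ν, a ν; 1, 0]

def continuantMatrix : ℕ → Matrix (Fin 2) (Fin 2) R
  | 0 => 1
  | n + 1 => continuantStep a b (n + 1) * continuantMatrix n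

lemma continuantMatrix_succ (n : ℕ) :
    continuantMatrix a b (n + 1) = continuantStep a b (n + 1) * continuantMatrix a b n := rfl

variable {a b}

lemma continuantMatrix_col {B : ℤ → R} (hBm1 : B (-1) = 0) (hB0 : B 0 = 1)
    (hBrec : ∀ ν : ℤ, 1 ≤ ν → B ν = b ν * B (ν - 1) + a ν * B (ν - 2)) (n : ℕ) :
    continuantMatrix a b n 0 0 = B n ∧ continuantMatrix a b n 1 0 = B (n - 1) := by
  induction n with
  | zero => simp [continuantMatrix, hB0, hBm1]
  | succ n ih =>
    have hrec := hBrec (n + 1) (by omega)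
    simp only [add_sub_cancel_right, show (n : ℤ) + 1 - 2 = n - 1 by ring] at hrec
    simp [continuantMatrix_succ, continuantStep, Matrix.mul_apply, ih, hrec]

lemma det_continuantMatrix (n : ℕ) :
    (continuantMatrix a b n).det = (-1) ^ n * ∏ i ∈ range n, a (i + 1) := by
  induction n with
  | zero => simp [continuantMatrix]
  | succ n ih =>
    rw [continuantMatrix_succ, det_mul, ih, continuantStep, det_fin_two_of, prod_range_succ]
    ring

lemma continuantMatrix_add_period {d : ℕ}
    (hpa : ∀ ν : ℤ, 1 ≤ ν → a (ν + d) = a ν) (hpb : ∀ ν : ℤ, 1 ≤ ν → b (ν + d) = b ν) (n : ℕ) :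
    continuantMatrix a b (n + d) = continuantMatrix a b n * continuantMatrix a b d := by
  induction n with
  | zero => simp [continuantMatrix]
  | succ n ih =>
    have hstep : continuantStep a b ((n + d : ℕ) + 1) = continuantStep a b (n + 1) := by
      rw [continuantStep, continuantStep, Nat.cast_add, add_right_comm, hpa _ (by omega),
        hpb _ (by omega)]
    rw [show n + 1 + d = n + d + 1 by omega, continuantMatrix_succ, hstep, ih,
      continuantMatrix_succ, mul_assoc]

lemma continuantMatrix_add_two_mul_period {d : ℕ}
    (hpa : ∀ ν : ℤ, 1 ≤ ν → a (ν + d) = a ν) (hpb : ∀ ν : ℤ, 1 ≤ ν → b (ν + d) = b ν) (n : ℕ) :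
    continuantMatrix a b (n + 2 * d) =
      (continuantMatrix a b d).trace • continuantMatrix a b (n + d) -
        (continuantMatrix a b d).det • continuantMatrix a b n := by
  rw [show n + 2 * d = n + d + d by ring, continuantMatrix_add_period hpa hpb (n + d),
    continuantMatrix_add_period hpa hpb n, mul_assoc, ← sq, sq_eq_trace_smul_sub_det_smul_one,
    mul_sub, mul_smul_comm, mul_smul_comm, mul_one]

lemma continuant_add_two_mul_period {d : ℕ} {B : ℤ → R} (hBm1 : B (-1) = 0) (hB0 : B 0 = 1)
    (hBrec : ∀ ν : ℤ, 1 ≤ ν → B ν = b ν * B (ν - 1) + a ν * B (ν - 2))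
    (hpa : ∀ ν : ℤ, 1 ≤ ν → a (ν + d) = a ν) (hpb : ∀ ν : ℤ, 1 ≤ ν → b (ν + d) = b ν) (n : ℕ) :
    B ↑(n + 2 * d) = (continuantMatrix a b d).trace * B ↑(n + d) -
        (continuantMatrix a b d).det * B n ∧
      B (↑(n + 2 * d) - 1) = (continuantMatrix a b d).trace * B (↑(n + d) - 1) -
        (continuantMatrix a b d).det * B (n - 1) := by
  have hQ := continuantMatrix_add_two_mul_period hpa hpb n
  have hcol := continuantMatrix_col hBm1 hB0 hBrec
  constructor
  · simpa [(hcol _).1] using congrFun (congrFun hQ 0) 0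
  · simpa [(hcol _).2] using congrFun (congrFun hQ 1) 0

end Continuant

lemma continuant_pos {R : Type*} [CommRing R] [LinearOrder R] [IsStrictOrderedRing R]
    {a b B : ℤ → R} (ha : ∀ ν : ℤ, 1 ≤ ν → 0 < a ν) (hb : ∀ ν : ℤ, 1 ≤ ν → 0 < b ν)
    (hBm1 : B (-1) = 0) (hB0 : B 0 = 1)
    (hBrec : ∀ ν : ℤ, 1 ≤ ν → B ν = b ν * B (ν - 1) + a ν * B (ν - 2)) (n : ℕ) :
    0 < B n := by
  suffices 0 < B n ∧ 0 ≤ B (n - 1) from this.1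
  induction n with
  | zero => simp [hB0, hBm1]
  | succ n ih =>
    have hrec := hBrec (n + 1) (by omega)
    simp only [add_sub_cancel_right, show (n : ℤ) + 1 - 2 = n - 1 by ring] at hrec
    push_cast
    rw [hrec, add_sub_cancel_right]
    exact ⟨add_pos_of_pos_of_nonneg (mul_pos (hb _ (by omega)) ih.1)
      (mul_nonneg (ha _ (by omega)).le ih.2), ih.1.le⟩

theorem generating_function_general
    (d : ℕ) (hd : 1 ≤ d) (a b : ℤ → ℤ)
    (ha : ∀ ν : ℤ, 1 ≤ ν → 0 < a ν) (hb : ∀ ν : ℤ, 1 ≤ ν → 0 < b ν)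
    (hpa : ∀ ν : ℤ, 1 ≤ ν → a (ν + d) = a ν) (hpb : ∀ ν : ℤ, 1 ≤ ν → b (ν + d) = b ν)
    (B : ℤ → ℤ) (hBm1 : B (-1) = 0) (hB0 : B 0 = 1)
    (hBrec : ∀ ν : ℤ, 1 ≤ ν → B ν = b ν * B (ν - 1) + a ν * B (ν - 2))
    (Cd Dd : ℤ)
    (hC : B ((d : ℤ) - 1) * Cd = B (2 * (d : ℤ) - 1))
    (hD : Dd = (-1 : ℤ) ^ (d - 1) * ∏ i ∈ Finset.range d, a ((i : ℤ) + 1)) :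
    ((1 : PowerSeries ℤ) - PowerSeries.C (R := ℤ) Cd * PowerSeries.X ^ d -
        PowerSeries.C (R := ℤ) Dd * PowerSeries.X ^ (2 * d)) *
      PowerSeries.mk (fun n : ℕ => B (n : ℤ)) =
    (∑ n ∈ Finset.range (2 * d), PowerSeries.C (R := ℤ) (B (n : ℤ)) * PowerSeries.X ^ n) -
      PowerSeries.C (R := ℤ) Cd *
        ∑ n ∈ Finset.range d, PowerSeries.C (R := ℤ) (B (n : ℤ)) * PowerSeries.X ^ (n + d) := by
  have hrec := continuant_add_two_mul_period hBm1 hB0 hBrec hpa hpb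
  have htrace : (continuantMatrix a b d).trace = Cd := by
    have hpos := continuant_pos ha hb hBm1 hB0 hBrec (d - 1)
    have hperiod := (hrec 0).2
    rw [Nat.cast_sub hd, Nat.cast_one] at hpos
    simp only [zero_add, Nat.cast_mul, Nat.cast_ofNat, CharP.cast_eq_zero, zero_sub, hBm1,
      mul_zero, sub_zero] at hperiod
    exact mul_left_cancel₀ hpos.ne' (by rw [hC, hperiod, mul_comm])
  have hdet : (continuantMatrix a b d).det = -Dd := by
    obtain ⟨k, rfl⟩ : ∃ k, d = k + 1 := ⟨d - 1, by omega⟩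
    rw [det_continuantMatrix, hD, pow_succ, Nat.add_sub_cancel]
    ring
  have key := mul_mk_eq_of_lacunary_recurrence (f := fun n ↦ B n) (c := Cd) (e := Dd) fun n ↦ by
    rw [(hrec n).1, htrace, hdet]
    ring
  rw [key, coe_trunc_mk, coe_trunc_mk, mul_assoc, mul_sum]
  congr 2
  exact sum_congr rfl fun n _ ↦ by ring

/-- Generating function identity for the periodic continuant denominators,
as an identity of formal power series over `ℤ`. -/
theorem generating_function
    (d : ℕ) (hd : 1 ≤ d) (a b : ℤ → ℤ)
    (ha : ∀ ν : ℤ, 1 ≤ ν → 0 < a ν) (hb : ∀ ν : ℤ, 1 ≤ ν → 0 < b ν)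
    (hpa : ∀ ν : ℤ, 1 ≤ ν → a (ν + d) = a ν) (hpb : ∀ ν : ℤ, 1 ≤ ν → b (ν + d) = b ν)
    (B : ℤ → ℤ) (hBm1 : B (-1) = 0) (hB0 : B 0 = 1)
    (hBrec : ∀ ν : ℤ, 1 ≤ ν → B ν = b ν * B (ν - 1) + a ν * B (ν - 2))
    (Cd Dd Δ : ℤ)
    (hC : B ((d : ℤ) - 1) * Cd = B (2 * (d : ℤ) - 1))
    (hD : Dd = (-1 : ℤ) ^ (d - 1) * ∏ i ∈ Finset.range d, a ((i : ℤ) + 1))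
    (hΔ : Δ = Cd ^ 2 + 4 * Dd) :
    ((1 : PowerSeries ℤ) - PowerSeries.C (R := ℤ) Cd * PowerSeries.X ^ d -
        PowerSeries.C (R := ℤ) Dd * PowerSeries.X ^ (2 * d)) *
      PowerSeries.mk (fun n : ℕ => B (n : ℤ)) =
    (∑ n ∈ Finset.range (2 * d), PowerSeries.C (R := ℤ) (B (n : ℤ)) * PowerSeries.X ^ n) -
      PowerSeries.C (R := ℤ) Cd *
        ∑ n ∈ Finset.range d, PowerSeries.C (R := ℤ) (B (n : ℤ)) * PowerSeries.X ^ (n + d) :=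
  generating_function_general d hd a b ha hb hpa hpb B hBm1 hB0 hBrec Cd Dd hC hD
end

section
/- For every integer r ≥ 0, the sequence of real numbers n ↦ B_{nd+r}/B_{nd+r−1} converges as n → ∞ to (β·B_{d+r} − B_r)/(β·B_{d+r−1} − B_{r−1}). -/
/-!
Along a residue class `c` modulo `d` the sequence obeys the constant-coefficient recurrence
`B (ν + 2d) = C_d B (ν + d) + D_d B ν`: the difference of the two sides solves the original
recurrence and vanishes at `ν = -1, 0`, the value at `0` coming from the Casoratian of `B` and its
shift by `d`. If `y > |z|` are the roots of `X² - C_d X - D_d` (so that `z = 1/β`), Binet's formula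
gives `B (n d + c) ≈ y ^ n (B (d + c) - z B c) / (y - z)`, so the ratios converge to
`(B (d + r) - z B r) / (B (d + r - 1) - z B (r - 1))`, which is the claimed limit. Its denominator
is positive because `ν ↦ B (ν + d) - z B ν` solves the recurrence with positive initial values:
`B d ^ 2 < B (2 d) = C_d B d + D_d` places `B d` above `z`.
-/

open Filter Topology

def SolvesRecurrence {R : Type*} [Semiring R] (a b u : ℤ → R) : Prop :=
  ∀ ν : ℤ, 1 ≤ ν → u ν = b ν * u (ν - 1) + a ν * u (ν - 2)

namespace SolvesRecurrence

variable {R : Type*} {a b u v : ℤ → R}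

section CommRing

variable [CommRing R]

theorem add (hu : SolvesRecurrence a b u) (hv : SolvesRecurrence a b v) :
    SolvesRecurrence a b (u + v) := fun ν hν => by
  simp only [Pi.add_apply, hu ν hν, hv ν hν]; ring

theorem sub (hu : SolvesRecurrence a b u) (hv : SolvesRecurrence a b v) :
    SolvesRecurrence a b (u - v) := fun ν hν => by
  simp only [Pi.sub_apply, hu ν hν, hv ν hν]; ring

theorem const_mul (hu : SolvesRecurrence a b u) (c : R) :
    SolvesRecurrence a b (fun ν => c * u ν) := fun ν hν => by
  simp only [hu ν hν]; ring

theorem map {S : Type*} [CommRing S] (hu : SolvesRecurrence a b u) (f : R →+* S) :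
    SolvesRecurrence (f ∘ a) (f ∘ b) (f ∘ u) := fun ν hν => by
  simp only [Function.comp_apply, hu ν hν, map_add, map_mul]

theorem shift {d : ℕ} (hpa : ∀ ν : ℤ, 1 ≤ ν → a (ν + d) = a ν)
    (hpb : ∀ ν : ℤ, 1 ≤ ν → b (ν + d) = b ν) (hu : SolvesRecurrence a b u) :
    SolvesRecurrence a b (fun ν => u (ν + d)) := fun ν hν => by
  simp only [sub_add_eq_add_sub]
  rw [hu _ (by omega), hpa ν hν, hpb ν hν]

theorem eq_zero (hu : SolvesRecurrence a b u) (h₀ : u (-1) = 0) (h₁ : u 0 = 0) :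
    ∀ ν, -1 ≤ ν → u ν = 0 := by
  suffices h : ∀ ν, 0 ≤ ν → u (ν - 1) = 0 ∧ u ν = 0 from
    fun ν hν => by simpa using (h (ν + 1) (by omega)).1
  intro ν hν
  induction ν, hν using Int.leInduction with
  | base => exact ⟨h₀, h₁⟩
  | succ ν hν ih =>
    refine ⟨by simpa using ih.2, ?_⟩
    rw [hu _ (by omega), add_sub_cancel_right, show ν + 1 - 2 = ν - 1 by ring, ih.1, ih.2]
    ring

theorem casoratian (hu : SolvesRecurrence a b u) (hv : SolvesRecurrence a b v) (n : ℕ) :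
    u n * v (n - 1) - u (n - 1) * v n =
      (-1) ^ n * (∏ i ∈ Finset.range n, a (i + 1)) * (u 0 * v (-1) - u (-1) * v 0) := by
  induction n with
  | zero => simp
  | succ n ih =>
    push_cast
    rw [hu (n + 1) (by omega), hv (n + 1) (by omega), add_sub_cancel_right,
      show (n : ℤ) + 1 - 2 = n - 1 by ring, Finset.prod_range_succ, pow_succ]
    linear_combination (-a (n + 1)) * ih

end CommRing

theorem pos [CommRing R] [PartialOrder R] [IsStrictOrderedRing R]
    (ha : ∀ ν : ℤ, 1 ≤ ν → 0 ≤ a ν) (hb : ∀ ν : ℤ, 1 ≤ ν → 0 < b ν)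
    (hu : SolvesRecurrence a b u) {m : ℤ} (hm : 0 ≤ m) (h₀ : 0 ≤ u (m - 1)) (h₁ : 0 < u m) :
    ∀ ν, m ≤ ν → 0 < u ν := by
  suffices h : ∀ ν, m ≤ ν → 0 ≤ u (ν - 1) ∧ 0 < u ν from fun ν hν => (h ν hν).2
  intro ν hν
  induction ν, hν using Int.leInduction with
  | base => exact ⟨h₀, h₁⟩
  | succ ν hν ih =>
    refine ⟨by simpa using ih.2.le, ?_⟩
    rw [hu _ (by omega), add_sub_cancel_right, show ν + 1 - 2 = ν - 1 by ring]
    exact add_pos_of_pos_of_nonneg (mul_pos (hb _ (by omega)) ih.2)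
      (mul_nonneg (ha _ (by omega)) ih.1)

end SolvesRecurrence

section PeriodicContinuant

variable {d : ℕ} {a b B : ℤ → ℤ}

theorem continuant_two_mul_period (hd : 1 ≤ d)
    (hpa : ∀ ν : ℤ, 1 ≤ ν → a (ν + d) = a ν) (hpb : ∀ ν : ℤ, 1 ≤ ν → b (ν + d) = b ν)
    (hB : SolvesRecurrence a b B) (hBm1 : B (-1) = 0) (hB0 : B 0 = 1) (hBd : B (d - 1) ≠ 0)
    {Cd Dd : ℤ} (hC : B (d - 1) * Cd = B (2 * d - 1))
    (hD : Dd = (-1) ^ (d - 1) * ∏ i ∈ Finset.range d, a (i + 1)) :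
    B (2 * d) = Cd * B d + Dd := by
  have h := (hB.shift hpa hpb).casoratian hB d
  simp only [hBm1, hB0, zero_add, mul_zero, mul_one, zero_sub, ← two_mul,
    show (d : ℤ) - 1 + d = 2 * d - 1 by ring, show (-1 : ℤ) + d = d - 1 by ring] at h
  have hsign : (-1 : ℤ) ^ d = -(-1) ^ (d - 1) := by
    obtain ⟨k, rfl⟩ : ∃ k, d = k + 1 := ⟨d - 1, by omega⟩
    simp [pow_succ]
  rw [hsign] at h
  apply mul_left_cancel₀ hBd
  linear_combination h - B d * hC - B (d - 1) * hD

theorem continuant_period_rec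
    (hpa : ∀ ν : ℤ, 1 ≤ ν → a (ν + d) = a ν) (hpb : ∀ ν : ℤ, 1 ≤ ν → b (ν + d) = b ν)
    (hB : SolvesRecurrence a b B) (hBm1 : B (-1) = 0) (hB0 : B 0 = 1)
    {Cd Dd : ℤ} (hC : B (d - 1) * Cd = B (2 * d - 1)) (h2d : B (2 * d) = Cd * B d + Dd) :
    ∀ ν, -1 ≤ ν → B (ν + 2 * d) = Cd * B (ν + d) + Dd * B ν := by
  have hBs := hB.shift hpa hpb
  have hE := (hBs.shift hpa hpb).sub ((hBs.const_mul Cd).add (hB.const_mul Dd))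
  have hE₀ : B (-1 + d + d) - (Cd * B (-1 + d) + Dd * B (-1)) = 0 := by
    rw [hBm1, show (-1 : ℤ) + d + d = 2 * d - 1 by ring, neg_add_eq_sub, ← hC]; ring
  have hE₁ : B (0 + d + d) - (Cd * B (0 + d) + Dd * B 0) = 0 := by
    rw [hB0, zero_add, ← two_mul, h2d]; ring
  intro ν hν
  have h := hE.eq_zero hE₀ hE₁ ν hν
  simp only [Pi.sub_apply, Pi.add_apply, sub_eq_zero] at h
  rw [two_mul, ← add_assoc, h]

theorem continuant_sq_lt (hd : 1 ≤ d)
    (ha : ∀ ν : ℤ, 1 ≤ ν → 0 < a ν) (hb : ∀ ν : ℤ, 1 ≤ ν → 0 < b ν)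
    (hpa : ∀ ν : ℤ, 1 ≤ ν → a (ν + d) = a ν) (hpb : ∀ ν : ℤ, 1 ≤ ν → b (ν + d) = b ν)
    (hB : SolvesRecurrence a b B) (hBm1 : B (-1) = 0) (hB0 : B 0 = 1) (hBd : 0 < B (d - 1)) :
    B d ^ 2 < B (2 * d) := by
  have hG := (hB.shift hpa hpb).sub (hB.const_mul (B d))
  have hG₀ : B (0 + d) - B d * B 0 = 0 := by simp [hB0]
  have hG₁ : 0 < B (1 + d) - B d * B 1 := by
    have h := hG 1 le_rfl
    simp only [Pi.sub_apply, sub_self, show (1 : ℤ) - 2 = -1 by norm_num] at h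
    rw [h, hG₀, hBm1, neg_add_eq_sub]
    simpa using mul_pos (ha 1 le_rfl) hBd
  have h := hG.pos (fun ν h => (ha ν h).le) hb zero_le_one hG₀.ge hG₁ d (by omega)
  simp only [Pi.sub_apply, ← two_mul] at h
  linarith

theorem continuant_sub_mul_pos
    (ha : ∀ ν : ℤ, 1 ≤ ν → 0 < a ν) (hb : ∀ ν : ℤ, 1 ≤ ν → 0 < b ν)
    (hpa : ∀ ν : ℤ, 1 ≤ ν → a (ν + d) = a ν) (hpb : ∀ ν : ℤ, 1 ≤ ν → b (ν + d) = b ν)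
    (hB : SolvesRecurrence a b B) (hBm1 : B (-1) = 0) (hB0 : B 0 = 1) (hBd : 0 < B (d - 1))
    {z : ℝ} (hz : z < B d) : ∀ c, -1 ≤ c → 0 < (B (d + c) : ℝ) - z * B c := by
  have hW := ((hB.shift hpa hpb).map (Int.castRingHom ℝ)).sub
    ((hB.map (Int.castRingHom ℝ)).const_mul z)
  have hWm1 : 0 < (B (-1 + d) : ℝ) - z * B (-1) := by
    simpa [hBm1, neg_add_eq_sub] using hBd
  have hW0 : 0 < (B (0 + d) : ℝ) - z * B 0 := by simpa [hB0] using hz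
  have h := hW.pos (fun ν h => by simpa using (ha ν h).le) (fun ν h => by simpa using hb ν h)
    le_rfl hWm1.le hW0
  intro c hc
  rcases hc.eq_or_lt with rfl | hc
  · simpa [add_comm] using hWm1
  · simpa [add_comm] using h c (by omega)

end PeriodicContinuant

section Binet

variable {R : Type*} [CommRing R] {f : ℕ → R} {y z : R}

theorem sub_mul_eq_pow_mul_of_rec (hf : ∀ n, f (n + 2) = (y + z) * f (n + 1) - y * z * f n)
    (n : ℕ) : f (n + 1) - z * f n = y ^ n * (f 1 - z * f 0) := by
  induction n with
  | zero => simp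
  | succ n ih => rw [hf, pow_succ]; linear_combination y * ih

theorem binet_of_rec (hf : ∀ n, f (n + 2) = (y + z) * f (n + 1) - y * z * f n) (n : ℕ) :
    (y - z) * f n = y ^ n * (f 1 - z * f 0) - z ^ n * (f 1 - y * f 0) := by
  have hf' : ∀ n, f (n + 2) = (z + y) * f (n + 1) - z * y * f n := fun n => by
    rw [hf]; ring
  linear_combination sub_mul_eq_pow_mul_of_rec hf n - sub_mul_eq_pow_mul_of_rec hf' n

end Binet

theorem tendsto_binet_div {x y p q p' q' : ℝ} (hxy : |y| < x) (hp' : p' ≠ 0) :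
    Tendsto (fun n : ℕ => (x ^ n * p - y ^ n * q) / (x ^ n * p' - y ^ n * q')) atTop
      (𝓝 (p / p')) := by
  have hx : 0 < x := (abs_nonneg y).trans_lt hxy
  have ht : Tendsto (fun n : ℕ => (y / x) ^ n) atTop (𝓝 0) := by
    refine tendsto_pow_atTop_nhds_zero_of_abs_lt_one ?_
    rwa [abs_div, abs_of_pos hx, div_lt_one hx]
  have hlim := (tendsto_const_nhds (x := p)).sub (ht.mul_const q) |>.div
    ((tendsto_const_nhds (x := p')).sub (ht.mul_const q')) (by simpa using hp')
  simp only [zero_mul, sub_zero] at hlim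
  refine hlim.congr fun n => ?_
  rw [Pi.div_apply, ← mul_div_mul_left _ _ (pow_ne_zero n hx.ne')]
  congr 1 <;> rw [div_pow] <;> field_simp

theorem exists_roots_of_discrim_pos {C D Δ β : ℝ} (hΔ : Δ = C ^ 2 + 4 * D) (hΔpos : 0 < Δ)
    (hD : D ≠ 0) (hβ : β = (-C - √Δ) / (2 * D)) :
    ∃ y z : ℝ, y + z = C ∧ y * z = -D ∧ z < y ∧ β * z = 1 := by
  have hs : √Δ ^ 2 = Δ := Real.sq_sqrt hΔpos.le
  refine ⟨(C + √Δ) / 2, (C - √Δ) / 2, by ring, by linear_combination (-hs - hΔ) / 4,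
    by linarith [Real.sqrt_pos.2 hΔpos], ?_⟩
  rw [hβ]
  field_simp
  linear_combination hs + hΔ

theorem root_lt_of_sq_lt_mul_add {x y z C D : ℝ} (hsum : y + z = C) (hprod : y * z = -D)
    (hzy : z < y) (h : x ^ 2 < C * x + D) : z < x := by
  rw [← hsum, show D = -(y * z) by linarith] at h
  by_contra! hle
  nlinarith [mul_nonneg (sub_nonneg.2 hle) (sub_nonneg.2 (hle.trans hzy.le))]

theorem tendsto_continuant_ratio {d : ℕ} {B : ℤ → ℤ} {Cd Dd : ℤ}
    (hper : ∀ ν, -1 ≤ ν → B (ν + 2 * d) = Cd * B (ν + d) + Dd * B ν)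
    {y z : ℝ} (hsum : y + z = Cd) (hprod : y * z = -Dd) (hzy : |z| < y) (r : ℕ)
    (hW : (B (d + r - 1) : ℝ) - z * B (r - 1) ≠ 0) :
    Tendsto (fun n : ℕ => (B (n * d + r) : ℝ) / B (n * d + r - 1)) atTop
      (𝓝 (((B (d + r) : ℝ) - z * B r) / ((B (d + r - 1) : ℝ) - z * B (r - 1)))) := by
  have hbinet (c : ℤ) (hc : -1 ≤ c) (n : ℕ) : (y - z) * (B (n * d + c) : ℝ) =
      y ^ n * ((B (d + c) : ℝ) - z * B c) - z ^ n * ((B (d + c) : ℝ) - y * B c) := by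
    have hf (n : ℕ) : (B ((n + 2 : ℕ) * d + c) : ℝ) =
        (y + z) * B ((n + 1 : ℕ) * d + c) - y * z * B (n * d + c) := by
      have h := hper (n * d + c) (by nlinarith)
      rw [hsum, hprod, show ((n + 2 : ℕ) : ℤ) * d + c = n * d + c + 2 * d by push_cast; ring,
        show ((n + 1 : ℕ) : ℤ) * d + c = n * d + c + d by push_cast; ring, h]
      push_cast; ring
    simpa using binet_of_rec (f := fun n : ℕ => (B (n * d + c) : ℝ)) hf n
  have hyz : y - z ≠ 0 := by linarith [le_abs_self z]
  refine (tendsto_binet_div (q := (B (d + r) : ℝ) - y * B r)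
    (q' := (B (d + r - 1) : ℝ) - y * B (r - 1)) hzy hW).congr fun n => ?_
  simp only [add_sub_assoc]
  rw [← hbinet r (by omega), ← hbinet (r - 1) (by omega), mul_div_mul_left _ _ hyz]

theorem limit_consecutive_terms_general
    (d : ℕ) (hd : 1 ≤ d) (a b : ℤ → ℤ)
    (ha : ∀ ν : ℤ, 1 ≤ ν → 0 < a ν) (hb : ∀ ν : ℤ, 1 ≤ ν → 0 < b ν)
    (hpa : ∀ ν : ℤ, 1 ≤ ν → a (ν + d) = a ν) (hpb : ∀ ν : ℤ, 1 ≤ ν → b (ν + d) = b ν)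
    (B : ℤ → ℤ) (hBm1 : B (-1) = 0) (hB0 : B 0 = 1)
    (hBrec : ∀ ν : ℤ, 1 ≤ ν → B ν = b ν * B (ν - 1) + a ν * B (ν - 2))
    (Cd Dd Δ : ℤ)
    (hC : B ((d : ℤ) - 1) * Cd = B (2 * (d : ℤ) - 1))
    (hD : Dd = (-1 : ℤ) ^ (d - 1) * ∏ i ∈ Finset.range d, a ((i : ℤ) + 1))
    (hΔ : Δ = Cd ^ 2 + 4 * Dd) (hΔpos : 0 < Δ)
    (β : ℝ)
    (hβ : β = (-(Cd : ℝ) - Real.sqrt (Δ : ℝ)) / (2 * (Dd : ℝ))) :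
    ∀ r : ℕ,
      Filter.Tendsto
        (fun n : ℕ => (B ((n : ℤ) * d + r) : ℝ) / (B ((n : ℤ) * d + r - 1) : ℝ))
        Filter.atTop
        (nhds ((β * (B ((d : ℤ) + r) : ℝ) - (B (r : ℤ) : ℝ)) /
          (β * (B ((d : ℤ) + r - 1) : ℝ) - (B ((r : ℤ) - 1) : ℝ)))) := by
  intro r
  have hBpos : ∀ ν, 0 ≤ ν → 0 < B ν :=
    SolvesRecurrence.pos (fun ν h => (ha ν h).le) hb hBrec le_rfl (by simp [hBm1]) (by simp [hB0])
  have hBd : 0 < B (d - 1) := hBpos _ (by omega)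
  have hCpos : 0 < Cd := pos_of_mul_pos_right (hC ▸ hBpos _ (by omega)) hBd.le
  have hDne : Dd ≠ 0 := by
    rw [hD]
    exact mul_ne_zero (pow_ne_zero _ (by norm_num)) (Finset.prod_pos fun i _ => ha _ (by omega)).ne'
  obtain ⟨y, z, hsum, hprod, hzy, hβz⟩ := exists_roots_of_discrim_pos (C := Cd)
    (by exact_mod_cast hΔ) (by exact_mod_cast hΔpos) (by exact_mod_cast hDne) hβ
  have h2d := continuant_two_mul_period hd hpa hpb hBrec hBm1 hB0 hBd.ne' hC hD
  have hper := continuant_period_rec hpa hpb hBrec hBm1 hB0 hC h2d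
  have hz : z < B d := root_lt_of_sq_lt_mul_add hsum hprod hzy
    (by exact_mod_cast h2d ▸ continuant_sq_lt hd ha hb hpa hpb hBrec hBm1 hB0 hBd)
  have hW := continuant_sub_mul_pos ha hb hpa hpb hBrec hBm1 hB0 hBd hz
  have hyz : 0 < y + z := hsum ▸ Int.cast_pos.2 hCpos
  have hlim := tendsto_continuant_ratio hper hsum hprod (abs_lt.2 ⟨by linarith, hzy⟩) r
    (by simpa [add_sub_assoc] using (hW (r - 1) (by omega)).ne')
  convert hlim using 2
  rw [← mul_div_mul_left _ _ (right_ne_zero_of_mul_eq_one hβz)]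
  congr 1
  · linear_combination (B (d + r) : ℝ) * hβz
  · linear_combination (B (d + r - 1) : ℝ) * hβz

/-- Limit of ratios of consecutive terms of the periodic continuant denominators. -/
theorem limit_consecutive_terms
    (d : ℕ) (hd : 1 ≤ d) (a b : ℤ → ℤ)
    (ha : ∀ ν : ℤ, 1 ≤ ν → 0 < a ν) (hb : ∀ ν : ℤ, 1 ≤ ν → 0 < b ν)
    (hpa : ∀ ν : ℤ, 1 ≤ ν → a (ν + d) = a ν) (hpb : ∀ ν : ℤ, 1 ≤ ν → b (ν + d) = b ν)
    (B : ℤ → ℤ) (hBm1 : B (-1) = 0) (hB0 : B 0 = 1)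
    (hBrec : ∀ ν : ℤ, 1 ≤ ν → B ν = b ν * B (ν - 1) + a ν * B (ν - 2))
    (Cd Dd Δ : ℤ)
    (hC : B ((d : ℤ) - 1) * Cd = B (2 * (d : ℤ) - 1))
    (hD : Dd = (-1 : ℤ) ^ (d - 1) * ∏ i ∈ Finset.range d, a ((i : ℤ) + 1))
    (hΔ : Δ = Cd ^ 2 + 4 * Dd) (hΔpos : 0 < Δ)
    (α β : ℝ)
    (hα : α = (-(Cd : ℝ) + Real.sqrt (Δ : ℝ)) / (2 * (Dd : ℝ)))
    (hβ : β = (-(Cd : ℝ) - Real.sqrt (Δ : ℝ)) / (2 * (Dd : ℝ))) :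
    ∀ r : ℕ,
      Filter.Tendsto
        (fun n : ℕ => (B ((n : ℤ) * d + r) : ℝ) / (B ((n : ℤ) * d + r - 1) : ℝ))
        Filter.atTop
        (nhds ((β * (B ((d : ℤ) + r) : ℝ) - (B (r : ℤ) : ℝ)) /
          (β * (B ((d : ℤ) + r - 1) : ℝ) - (B ((r : ℤ) - 1) : ℝ)))) :=
  limit_consecutive_terms_general d hd a b ha hb hpa hpb B hBm1 hB0 hBrec Cd Dd Δ hC hD hΔ hΔpos β
    hβ
end

section
/- Suppose D_d = 1 (i.e., d is odd and a_1·a_2⋯a_d = 1). Then the series of real numbers ∑_{n=1}^∞ arctan( B_{2d−1} / B_{(2n+1)d−1} ) converges, and its sum equals arctan( B_{d−1} / B_{2d−1} ). -/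
/-!
Put `x_k = B_{k-1}`. The monodromy matrix of the `d`-periodic recurrence has determinant
`(-1)^d a_1 ⋯ a_d = -D_d = -1`, so by Cayley–Hamilton `x_{k+2d} = T x_{k+d} + x_k`, where `T` is its
trace; at `k = 0` this reads `B_{2d-1} = T B_{d-1}`, i.e. `T = C_d`. Hence `x_{nd} = B_{d-1} U_n`
for the Lucas sequence `U_{n+2} = C_d U_{n+1} + U_n`, and the `n`-th term of the series is
`arctan (C_d / U_{2n+3})`. Cassini's identity `U_{2n+2} U_{2n+4} = U_{2n+3}^2 - 1` turns this into
`arctan (1 / U_{2n+2}) - arctan (1 / U_{2n+4})`, so the series telescopes to `arctan (1 / U_2)`.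
-/

open Real Filter Finset Topology

namespace SecondOrderRecurrence

variable {R : Type*} [CommRing R] (p q : ℕ → R)

def IsSolution (x : ℕ → R) : Prop :=
  ∀ k, x (k + 2) = p k * x (k + 1) + q k * x k

def solution (x₀ x₁ : R) : ℕ → R
  | 0 => x₀
  | 1 => x₁
  | k + 2 => p k * solution x₀ x₁ (k + 1) + q k * solution x₀ x₁ k

@[simp] lemma solution_zero (x₀ x₁ : R) : solution p q x₀ x₁ 0 = x₀ := rfl

@[simp] lemma solution_one (x₀ x₁ : R) : solution p q x₀ x₁ 1 = x₁ := rfl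

lemma isSolution_solution (x₀ x₁ : R) : IsSolution p q (solution p q x₀ x₁) := fun _ => rfl

/-- The trace of the monodromy matrix `(x_k, x_{k+1}) ↦ (x_{k+d}, x_{k+d+1})`. -/
def periodTrace (d : ℕ) : R := solution p q 1 0 d + solution p q 0 1 (d + 1)

/-- The determinant of the monodromy matrix, see `casoratian_solution_zero_one_solution_one_zero`. -/
def periodDet (d : ℕ) : R := (-1) ^ d * ∏ i ∈ range d, q i

def casoratian (x y : ℕ → R) (k : ℕ) : R := x (k + 1) * y k - x k * y (k + 1)

variable {p q} {x y : ℕ → R}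

lemma periodDet_eq_neg {d : ℕ} (hd : d ≠ 0) :
    periodDet q d = -((-1) ^ (d - 1) * ∏ i ∈ range d, q i) := by
  obtain ⟨e, rfl⟩ := Nat.exists_eq_succ_of_ne_zero hd
  simp [periodDet, pow_succ]

lemma IsSolution.ext (hx : IsSolution p q x) (hy : IsSolution p q y)
    (h₀ : x 0 = y 0) (h₁ : x 1 = y 1) : x = y := by
  funext k
  induction k using Nat.twoStepInduction with
  | zero => exact h₀
  | one => exact h₁
  | more k ih₀ ih₁ => rw [hx, hy, ih₀, ih₁]

lemma IsSolution.add (hx : IsSolution p q x) (hy : IsSolution p q y) :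
    IsSolution p q (x + y) := fun k => by
  simp only [Pi.add_apply, hx k, hy k]; ring

lemma IsSolution.const_mul (c : R) (hx : IsSolution p q x) :
    IsSolution p q (fun k => c * x k) := fun k => by
  simp only [hx k]; ring

lemma IsSolution.eq_add_mul (hx : IsSolution p q x) (k : ℕ) :
    x k = x 0 * solution p q 1 0 k + x 1 * solution p q 0 1 k := by
  have hsol := ((isSolution_solution p q 1 0).const_mul (x 0)).add
    ((isSolution_solution p q 0 1).const_mul (x 1))
  exact congrFun (hx.ext hsol (by simp) (by simp)) k

lemma IsSolution.comp_add {d : ℕ} (hp : ∀ k, p (k + d) = p k) (hq : ∀ k, q (k + d) = q k)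
    (hx : IsSolution p q x) : IsSolution p q (fun k => x (k + d)) := fun k => by
  simp only [← hp k, ← hq k, Nat.add_right_comm k _ d]
  exact hx (k + d)

lemma IsSolution.apply_add_period {d : ℕ} (hp : ∀ k, p (k + d) = p k)
    (hq : ∀ k, q (k + d) = q k) (hx : IsSolution p q x) (k : ℕ) :
    x (k + d) = x d * solution p q 1 0 k + x (d + 1) * solution p q 0 1 k := by
  simpa [Nat.add_comm 1 d] using (hx.comp_add hp hq).eq_add_mul k

lemma IsSolution.casoratian_succ (hx : IsSolution p q x) (hy : IsSolution p q y) (k : ℕ) :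
    casoratian x y (k + 1) = -q k * casoratian x y k := by
  simp only [casoratian, hx k, hy k]; ring

lemma IsSolution.casoratian_eq (hx : IsSolution p q x) (hy : IsSolution p q y) (k : ℕ) :
    casoratian x y k = (-1) ^ k * (∏ i ∈ range k, q i) * casoratian x y 0 := by
  induction k with
  | zero => simp
  | succ k ih => rw [hx.casoratian_succ hy, ih, prod_range_succ]; ring

lemma casoratian_solution_zero_one_solution_one_zero (d : ℕ) :
    casoratian (solution p q 0 1) (solution p q 1 0) d = periodDet q d := by
  rw [(isSolution_solution p q 0 1).casoratian_eq (isSolution_solution p q 1 0)]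
  simp [casoratian, periodDet]

/-- Cayley–Hamilton for the monodromy matrix. -/
lemma IsSolution.add_two_mul_period {d : ℕ} (hp : ∀ k, p (k + d) = p k)
    (hq : ∀ k, q (k + d) = q k) (hx : IsSolution p q x) (k : ℕ) :
    x (k + 2 * d) = periodTrace p q d * x (k + d) - periodDet q d * x k := by
  have hshift := fun {y} (hy : IsSolution p q y) => hy.apply_add_period hp hq
  have hdet := casoratian_solution_zero_one_solution_one_zero (p := p) (q := q) d
  rw [casoratian] at hdet
  rw [show k + 2 * d = k + d + d by ring, hshift hx, hshift hx,
    hshift (isSolution_solution p q 0 1) k, hshift (isSolution_solution p q 1 0) k,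
    periodTrace, ← hdet, hx.eq_add_mul k, hx.eq_add_mul d, hx.eq_add_mul (d + 1)]
  ring

lemma IsSolution.periodTrace_mul {d : ℕ} (hp : ∀ k, p (k + d) = p k)
    (hq : ∀ k, q (k + d) = q k) (hx : IsSolution p q x) (hx₀ : x 0 = 0) :
    periodTrace p q d * x d = x (2 * d) := by
  simpa [hx₀] using (hx.add_two_mul_period hp hq 0).symm

/-- The Lucas sequence `U(P, Q)`: `U₀ = 0`, `U₁ = 1`, `Uₙ₊₂ = P Uₙ₊₁ - Q Uₙ`. -/
def lucasU (P Q : R) : ℕ → R := solution (fun _ => P) (fun _ => -Q) 0 1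

section Lucas

variable (P Q : R)

lemma isSolution_lucasU : IsSolution (fun _ => P) (fun _ => -Q) (lucasU P Q) :=
  isSolution_solution _ _ 0 1

@[simp] lemma lucasU_zero : lucasU P Q 0 = 0 := rfl

@[simp] lemma lucasU_one : lucasU P Q 1 = 1 := rfl

lemma lucasU_add_two (n : ℕ) :
    lucasU P Q (n + 2) = P * lucasU P Q (n + 1) - Q * lucasU P Q n := by
  rw [isSolution_lucasU P Q n]; ring

@[simp] lemma lucasU_two : lucasU P Q 2 = P := by simpa using lucasU_add_two P Q 0

lemma lucasU_mul_lucasU_add_two_sub_sq (n : ℕ) :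
    lucasU P Q n * lucasU P Q (n + 2) - lucasU P Q (n + 1) ^ 2 = -Q ^ n := by
  have h := (isSolution_lucasU P Q).comp_add (d := 1) (fun _ => rfl) (fun _ => rfl)
    |>.casoratian_eq (isSolution_lucasU P Q) n
  simp only [casoratian, prod_const, card_range, zero_add, lucasU_one, lucasU_zero] at h
  rw [← mul_pow, neg_one_mul, neg_neg] at h
  linear_combination h

end Lucas

lemma IsSolution.apply_mul_period {d : ℕ} (hp : ∀ k, p (k + d) = p k)
    (hq : ∀ k, q (k + d) = q k) (hx : IsSolution p q x) (hx₀ : x 0 = 0) (n : ℕ) :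
    x (n * d) = x d * lucasU (periodTrace p q d) (periodDet q d) n := by
  have hsol : IsSolution (fun _ => periodTrace p q d) (fun _ => -periodDet q d)
      (fun n => x (n * d)) := fun n => by
    dsimp only
    rw [show (n + 2) * d = n * d + 2 * d by ring, hx.add_two_mul_period hp hq,
      show n * d + d = (n + 1) * d by ring]
    ring
  exact congrFun (hsol.ext ((isSolution_lucasU _ _).const_mul (x d)) (by simp [hx₀]) (by simp)) n

section Ordered

variable [LinearOrder R] [IsStrictOrderedRing R]

lemma IsSolution.pos (hp : ∀ k, 0 < p k) (hq : ∀ k, 0 ≤ q k) (hx : IsSolution p q x)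
    (h₀ : 0 ≤ x 0) (h₁ : 0 < x 1) {k : ℕ} (hk : k ≠ 0) : 0 < x k := by
  obtain ⟨k, rfl⟩ := Nat.exists_eq_succ_of_ne_zero hk
  clear hk
  suffices 0 < x (k + 1) ∧ 0 ≤ x k from this.1
  induction k with
  | zero => exact ⟨h₁, h₀⟩
  | succ k ih =>
    rw [hx k]
    exact ⟨add_pos_of_pos_of_nonneg (mul_pos (hp k) ih.1) (mul_nonneg (hq k) ih.2), ih.1.le⟩

variable {P Q : R}

lemma one_le_lucasU (hP : 1 ≤ P) (hQ : Q ≤ -1) (n : ℕ) : 1 ≤ lucasU P Q (n + 1) := by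
  induction n using Nat.twoStepInduction with
  | zero => simp
  | one => simpa using hP
  | more n ih₀ ih₁ =>
    rw [lucasU_add_two]
    nlinarith

lemma natCast_add_one_le_lucasU (hP : 1 ≤ P) (hQ : Q ≤ -1) (n : ℕ) :
    (n : R) + 1 ≤ lucasU P Q (n + 2) := by
  induction n with
  | zero => simpa using hP
  | succ n ih =>
    have h₁ := one_le_lucasU hP hQ n
    rw [lucasU_add_two]
    push_cast
    nlinarith

end Ordered

end SecondOrderRecurrence

open SecondOrderRecurrence

lemma arctan_inv_sub_arctan_inv {p q r c : ℝ} (hp : 0 < p) (hr : 0 < r)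
    (hpr : p * r = q ^ 2 - 1) (hrec : r = c * q + p) :
    arctan p⁻¹ - arctan r⁻¹ = arctan (c / q) := by
  have hq : q ≠ 0 := by rintro rfl; nlinarith [mul_pos hp hr]
  have hmul : p⁻¹ * -r⁻¹ < 1 := by
    rw [mul_neg, ← mul_inv]; linarith [inv_pos.2 (mul_pos hp hr)]
  rw [sub_eq_add_neg, ← arctan_neg, arctan_add hmul]
  congr 1
  rw [div_eq_div_iff (by linarith) hq]
  field_simp
  linear_combination q * hrec - c * hpr

lemma hasSum_sub_succ_of_tendsto {g : ℕ → ℝ} {L : ℝ} (hg : ∀ n, g (n + 1) ≤ g n)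
    (hL : Tendsto g atTop (𝓝 L)) : HasSum (fun n => g n - g (n + 1)) (g 0 - L) := by
  rw [hasSum_iff_tendsto_nat_of_nonneg (fun n => sub_nonneg.2 (hg n))]
  simp_rw [sum_range_sub']
  exact tendsto_const_nhds.sub hL

theorem hasSum_arctan_div_lucasU {c : ℝ} (hc : 1 ≤ c) :
    HasSum (fun n => arctan (c / lucasU c (-1) (2 * n + 3))) (arctan c⁻¹) := by
  set f := lucasU c (-1)
  have hf : ∀ n, 1 ≤ f (n + 1) := one_le_lucasU hc le_rfl
  have hterm : ∀ n, arctan (f (2 * n + 2))⁻¹ - arctan (f (2 * (n + 1) + 2))⁻¹ =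
      arctan (c / f (2 * n + 3)) := fun n => by
    refine arctan_inv_sub_arctan_inv (by linarith [hf (2 * n + 1)])
      (by linarith [hf (2 * (n + 1) + 1)]) ?_ ?_
    · have hcassini := lucasU_mul_lucasU_add_two_sub_sq c (-1) (2 * n + 2)
      rw [Even.neg_one_pow ⟨n + 1, by ring⟩] at hcassini
      linear_combination hcassini
    · linear_combination lucasU_add_two c (-1) (2 * n + 2)
  have hlim : Tendsto (fun n => arctan (f (2 * n + 2))⁻¹) atTop (𝓝 0) := by
    have hf_top : Tendsto (fun n => f (2 * n + 2)) atTop atTop :=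
      tendsto_atTop_mono (fun n => (natCast_add_one_le_lucasU hc le_rfl (2 * n)).trans' (by
        push_cast; linarith [n.cast_nonneg (α := ℝ)])) tendsto_natCast_atTop_atTop
    simpa [Function.comp_def] using
      (continuous_arctan.tendsto 0).comp (tendsto_inv_atTop_zero.comp hf_top)
  have hsum := hasSum_sub_succ_of_tendsto (fun n => ?_) hlim
  · simp_rw [hterm] at hsum
    simpa [f] using hsum
  · rw [← sub_nonneg, hterm, arctan_nonneg]
    exact div_nonneg (by linarith) (by linarith [hf (2 * n + 2)])

theorem SecondOrderRecurrence.IsSolution.hasSum_arctan_div {p q x : ℕ → ℝ} {d : ℕ} {c : ℝ}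
    (hp : ∀ k, p (k + d) = p k) (hq : ∀ k, q (k + d) = q k) (hx : IsSolution p q x)
    (hx₀ : x 0 = 0) (hxd : 0 < x d) (hdet : periodDet q d = -1) (hx2d : x (2 * d) = x d * c)
    (hc : 1 ≤ c) :
    HasSum (fun n => arctan (x (2 * d) / x ((2 * n + 3) * d))) (arctan (x d / x (2 * d))) := by
  have htrace : periodTrace p q d = c := mul_right_cancel₀ hxd.ne'
    ((hx.periodTrace_mul hp hq hx₀).trans (hx2d.trans (mul_comm _ _)))
  have hlucas : ∀ n, x (n * d) = x d * lucasU c (-1) n := by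
    simpa [htrace, hdet] using hx.apply_mul_period hp hq hx₀
  rw [hx2d, div_mul_cancel_left₀ hxd.ne']
  simpa only [hlucas, mul_div_mul_left _ _ hxd.ne'] using hasSum_arctan_div_lucasU hc

lemma isSolution_of_int_recurrence {R : Type*} [CommRing R] {a b B : ℤ → ℤ}
    (hB : ∀ ν : ℤ, 1 ≤ ν → B ν = b ν * B (ν - 1) + a ν * B (ν - 2)) :
    IsSolution (fun k => (b (k + 1) : R)) (fun k => (a (k + 1) : R))
      (fun k => (B (k - 1) : R)) := fun k => by
  dsimp only
  rw [show ((k + 2 : ℕ) : ℤ) - 1 = k + 1 by push_cast; ring,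
    show ((k + 1 : ℕ) : ℤ) - 1 = k by push_cast; ring, hB (k + 1) (by omega),
    show (k : ℤ) + 1 - 1 = k by ring, show (k : ℤ) + 1 - 2 = k - 1 by ring]
  push_cast
  ring

lemma intCast_add_one_periodic {R : Type*} [CommRing R] {f : ℤ → ℤ} {d : ℕ}
    (hf : ∀ ν : ℤ, 1 ≤ ν → f (ν + d) = f ν) (k : ℕ) :
    (f ((k + d : ℕ) + 1) : R) = f (k + 1) := by
  rw [← hf (k + 1) (by omega)]; push_cast; ring_nf

theorem arctan_series_general
    (d : ℕ) (hd : 1 ≤ d) (a b : ℤ → ℤ)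
    (ha : ∀ ν : ℤ, 1 ≤ ν → 0 < a ν) (hb : ∀ ν : ℤ, 1 ≤ ν → 0 < b ν)
    (hpa : ∀ ν : ℤ, 1 ≤ ν → a (ν + d) = a ν) (hpb : ∀ ν : ℤ, 1 ≤ ν → b (ν + d) = b ν)
    (B : ℤ → ℤ) (hBm1 : B (-1) = 0) (hB0 : B 0 = 1)
    (hBrec : ∀ ν : ℤ, 1 ≤ ν → B ν = b ν * B (ν - 1) + a ν * B (ν - 2))
    (Cd Dd : ℤ)
    (hC : B ((d : ℤ) - 1) * Cd = B (2 * (d : ℤ) - 1))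
    (hD : Dd = (-1 : ℤ) ^ (d - 1) * ∏ i ∈ Finset.range d, a ((i : ℤ) + 1))
    (hD1 : Dd = 1) :
    HasSum
      (fun n : ℕ =>
        Real.arctan ((B (2 * (d : ℤ) - 1) : ℝ) / (B ((2 * ((n : ℤ) + 1) + 1) * d - 1) : ℝ)))
      (Real.arctan ((B ((d : ℤ) - 1) : ℝ) / (B (2 * (d : ℤ) - 1) : ℝ))) := by
  set p : ℕ → ℝ := fun k => b (k + 1)
  set q : ℕ → ℝ := fun k => a (k + 1)
  set x : ℕ → ℝ := fun k => B (k - 1)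
  have hx : IsSolution p q x := isSolution_of_int_recurrence hBrec
  have hp : ∀ k, p (k + d) = p k := intCast_add_one_periodic hpb
  have hq : ∀ k, q (k + d) = q k := intCast_add_one_periodic hpa
  have hx₀ : x 0 = 0 := by simp [x, hBm1]
  have hxpos : ∀ {k}, k ≠ 0 → 0 < x k :=
    hx.pos (fun k => Int.cast_pos.2 (hb (k + 1) (by omega)))
      (fun k => Int.cast_nonneg (ha (k + 1) (by omega)).le) hx₀.ge (by simp [x, hB0])
  have hxd : 0 < x d := hxpos (by omega)
  have hdet : periodDet q d = -1 := by
    have hD' : (-1) ^ (d - 1) * ∏ i ∈ range d, a (i + 1) = 1 := hD ▸ hD1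
    rw [periodDet_eq_neg (by omega)]
    simp only [q]
    exact_mod_cast congrArg Neg.neg hD'
  have hx2d : x (2 * d) = x d * Cd := by
    simp only [x]; rw [← Int.cast_mul, hC]; push_cast; rfl
  have hC₁ : (1 : ℝ) ≤ Cd := by
    have hCpos : (0 : ℝ) < Cd := pos_of_mul_pos_right (hx2d ▸ hxpos (by omega)) hxd.le
    exact_mod_cast Int.cast_pos.1 hCpos
  convert hx.hasSum_arctan_div hp hq hx₀ hxd hdet hx2d hC₁ using 1 <;>
    simp only [x] <;> push_cast <;> ring_nf

/-- The arctangent telescoping series: if `D_d = 1` then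
`∑_{n≥1} arctan(B_{2d−1}/B_{(2n+1)d−1}) = arctan(B_{d−1}/B_{2d−1})`
(the series is indexed here by `n : ℕ` via the shift `n ↦ n + 1`). -/
theorem arctan_series
    (d : ℕ) (hd : 1 ≤ d) (a b : ℤ → ℤ)
    (ha : ∀ ν : ℤ, 1 ≤ ν → 0 < a ν) (hb : ∀ ν : ℤ, 1 ≤ ν → 0 < b ν)
    (hpa : ∀ ν : ℤ, 1 ≤ ν → a (ν + d) = a ν) (hpb : ∀ ν : ℤ, 1 ≤ ν → b (ν + d) = b ν)
    (B : ℤ → ℤ) (hBm1 : B (-1) = 0) (hB0 : B 0 = 1)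
    (hBrec : ∀ ν : ℤ, 1 ≤ ν → B ν = b ν * B (ν - 1) + a ν * B (ν - 2))
    (Cd Dd Δ : ℤ)
    (hC : B ((d : ℤ) - 1) * Cd = B (2 * (d : ℤ) - 1))
    (hD : Dd = (-1 : ℤ) ^ (d - 1) * ∏ i ∈ Finset.range d, a ((i : ℤ) + 1))
    (hΔ : Δ = Cd ^ 2 + 4 * Dd)
    (hD1 : Dd = 1) :
    HasSum
      (fun n : ℕ =>
        Real.arctan ((B (2 * (d : ℤ) - 1) : ℝ) / (B ((2 * ((n : ℤ) + 1) + 1) * d - 1) : ℝ)))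
      (Real.arctan ((B ((d : ℤ) - 1) : ℝ) / (B (2 * (d : ℤ) - 1) : ℝ))) :=
  arctan_series_general d hd a b ha hb hpa hpb B hBm1 hB0 hBrec Cd Dd hC hD hD1
end

section
/- Suppose D_d = 1 (i.e., d is odd and a_1·a_2⋯a_d = 1). Then the series of real numbers ∑_{n=2}^∞ artanh( B_{2d−1} / B_{2nd−1} ) converges, and its sum equals (1/2)·ln( (B_{3d−1} + B_{d−1}) / (B_{3d−1} − B_{d−1}) ), where artanh denotes the inverse hyperbolic tangent. -/
/-!
Write `x k = B (k - 1)`, a solution of a three-term recurrence with `d`-periodic coefficients, and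
let `X`, `Y` be the solutions with initial values `(0, 1)` and `(1, 0)`. Expanding the shifted
solutions `k ↦ x (n d + k)` in the basis `Y, X` shows that `t n = x (n d)` satisfies
`t (n + 2) = T t (n + 1) + δ t n` with `T = Y d + X (d + 1)` (the trace of the monodromy matrix)
and `δ = (-1) ^ (d + 1) ∏ a`, read off from the Casoratian of `X` and `Y`; here `δ = D_d = 1`.
Then `t 2 = T t 1` and Cassini's identity `t (2n+4) ^ 2 - t (2n+3) t (2n+5) = -t 1 ^ 2` turn the
subtraction formula for `artanh` into
`artanh (t 2 / t (2n+4)) = artanh (t 1 / t (2n+3)) - artanh (t 1 / t (2n+5))`,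
so the series telescopes to `artanh (t 1 / t 3)`, the tail vanishing because `t (2n+1) → ∞`.
-/

noncomputable def artanh (x : ℝ) : ℝ := (1 / 2) * Real.log ((1 + x) / (1 - x))

open Filter Topology Finset Function

theorem artanh_div (x y : ℝ) : artanh (y / x) = 1 / 2 * Real.log ((x + y) / (x - y)) := by
  rcases eq_or_ne x 0 with rfl | hx
  · rcases eq_or_ne y 0 with rfl | hy
    · simp [artanh]
    · simp [artanh, div_neg, div_self hy]
  · rw [artanh]
    congr 2
    field_simp

theorem artanh_nonneg {x : ℝ} (h0 : 0 ≤ x) (h1 : x < 1) : 0 ≤ artanh x :=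
  mul_nonneg (by norm_num) (Real.log_nonneg ((one_le_div (by linarith)).2 (by linarith)))

theorem artanh_sub_artanh {x y : ℝ} (hx : |x| < 1) (hy : |y| < 1) :
    artanh x - artanh y = artanh ((x - y) / (1 - x * y)) := by
  rw [abs_lt] at hx hy
  have hxy : 0 < 1 - x * y := by nlinarith
  unfold artanh
  rw [← mul_sub, ← Real.log_div (div_ne_zero (by linarith) (by linarith))
    (div_ne_zero (by linarith) (by linarith))]
  congr 2
  field_simp
  ring

theorem tendsto_artanh_zero : Tendsto artanh (𝓝 0) (𝓝 0) := by
  have : ContinuousAt artanh 0 := by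
    unfold artanh
    fun_prop (disch := norm_num)
  simpa [artanh] using this.tendsto

theorem hasSum_sub_succ_of_tendsto_s16 {f : ℕ → ℝ} {l : ℝ} (hf : ∀ n, f (n + 1) ≤ f n)
    (hl : Tendsto f atTop (𝓝 l)) : HasSum (fun n ↦ f n - f (n + 1)) (f 0 - l) := by
  refine (hasSum_iff_tendsto_nat_of_nonneg (fun n ↦ sub_nonneg.2 (hf n)) _).2 ?_
  simp_rw [sum_range_sub']
  exact tendsto_const_nhds.sub hl

namespace ThreeTermRec

section CommRing

variable {R : Type*} [CommRing R] (a b : ℕ → R)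

def IsSolution (x : ℕ → R) : Prop :=
  ∀ k, x (k + 2) = b k * x (k + 1) + a k * x k

def sol (x₀ x₁ : R) : ℕ → R
  | 0 => x₀
  | 1 => x₁
  | k + 2 => b k * sol x₀ x₁ (k + 1) + a k * sol x₀ x₁ k

theorem isSolution_sol (x₀ x₁ : R) : IsSolution a b (sol a b x₀ x₁) := fun _ ↦ rfl

variable {a b} {x y : ℕ → R}

theorem IsSolution.eq_add (hx : IsSolution a b x) (k : ℕ) :
    x k = x 0 * sol a b 1 0 k + x 1 * sol a b 0 1 k := by
  induction k using Nat.twoStepInduction with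
  | zero => simp [sol]
  | one => simp [sol]
  | more k ih₀ ih₁ => rw [hx, ih₀, ih₁]; simp only [sol]; ring

theorem IsSolution.comp_add (hx : IsSolution a b x) {p : ℕ} (ha : Periodic a p)
    (hb : Periodic b p) : IsSolution a b (fun k ↦ x (p + k)) := by
  intro k
  rw [← ha k, ← hb k, add_comm k p]
  exact hx (p + k)

theorem IsSolution.casoratian (hx : IsSolution a b x) (hy : IsSolution a b y) (k : ℕ) :
    x k * y (k + 1) - x (k + 1) * y k =
      (-1) ^ k * (∏ i ∈ range k, a i) * (x 0 * y 1 - x 1 * y 0) := by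
  induction k with
  | zero => simp
  | succ k ih => rw [hx, hy, prod_range_succ, pow_succ]; linear_combination (-a k) * ih

theorem IsSolution.comp_mul (hx : IsSolution a b x) {d : ℕ} (ha : Periodic a d)
    (hb : Periodic b d) :
    IsSolution (fun _ ↦ (-1) ^ (d + 1) * ∏ i ∈ range d, a i)
      (fun _ ↦ sol a b 1 0 d + sol a b 0 1 (d + 1)) (fun n ↦ x (n * d)) := by
  set X := sol a b 0 1
  set Y := sol a b 1 0
  have shift (m k : ℕ) : x (m * d + k) = x (m * d) * Y k + x (m * d + 1) * X k :=
    (hx.comp_add (ha.nat_mul m) (hb.nat_mul m)).eq_add k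
  have hW := (isSolution_sol a b 0 1).casoratian (isSolution_sol a b 1 0) d
  simp only [sol] at hW
  intro n
  have e₁ := shift n d
  have e₂ := shift (n + 1) d
  have e₃ := shift n (d + 1)
  simp only [add_mul, one_mul, ← add_assoc] at e₂ e₃ ⊢
  rw [show n * d + d + d = n * d + 2 * d by ring] at e₂
  linear_combination e₂ + X d * e₃ - X (d + 1) * e₁ + x (n * d) * hW

theorem IsSolution.cassini {t : ℕ → R} {T : R}
    (ht : IsSolution (fun _ ↦ 1) (fun _ ↦ T) t) (n : ℕ) :
    t (n + 1) ^ 2 - t n * t (n + 2) = (-1) ^ n * (t 1 ^ 2 - t 0 * t 2) := by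
  have := ht.casoratian (ht.comp_add (p := 1) (fun _ ↦ rfl) (fun _ ↦ rfl)) n
  simp only [prod_const_one, mul_one, add_comm 1] at this
  linear_combination -this

end CommRing

section Ordered

variable {R : Type*} [CommRing R] [PartialOrder R] [IsStrictOrderedRing R] {a b x : ℕ → R}

theorem IsSolution.nonneg (hx : IsSolution a b x) (ha : ∀ k, 0 ≤ a k) (hb : ∀ k, 0 ≤ b k)
    (h₀ : 0 ≤ x 0) (h₁ : 0 ≤ x 1) (k : ℕ) : 0 ≤ x k := by
  induction k using Nat.twoStepInduction with
  | zero => exact h₀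
  | one => exact h₁
  | more k ih₀ ih₁ =>
    rw [hx]
    exact add_nonneg (mul_nonneg (hb k) ih₁) (mul_nonneg (ha k) ih₀)

theorem IsSolution.pos_succ (hx : IsSolution a b x) (ha : ∀ k, 0 ≤ a k) (hb : ∀ k, 0 < b k)
    (h₀ : 0 ≤ x 0) (h₁ : 0 < x 1) (k : ℕ) : 0 < x (k + 1) := by
  induction k with
  | zero => exact h₁
  | succ k ih =>
    rw [hx]
    exact add_pos_of_pos_of_nonneg (mul_pos (hb k) ih)
      (mul_nonneg (ha k) (hx.nonneg ha (fun k ↦ (hb k).le) h₀ h₁.le k))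

end Ordered

section Constant

variable {t : ℕ → ℝ} {T : ℝ}

theorem IsSolution.strictMono_two_mul_add (ht : IsSolution (fun _ ↦ 1) (fun _ ↦ T) t)
    (hT : 0 < T) (h₀ : 0 ≤ t 0) (h₁ : 0 < t 1) (k : ℕ) :
    StrictMono (fun n ↦ t (2 * n + k)) := by
  have pos := ht.pos_succ (fun _ ↦ zero_le_one) (fun _ ↦ hT) h₀ h₁
  refine strictMono_nat_of_lt_succ fun n ↦ ?_
  rw [show 2 * (n + 1) + k = 2 * n + k + 2 by ring, ht]
  nlinarith [pos (2 * n + k)]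

theorem IsSolution.tendsto_atTop_odd (ht : IsSolution (fun _ ↦ 1) (fun _ ↦ T) t) (hT : 0 < T)
    (h₀ : 0 ≤ t 0) (h₁ : 0 < t 1) : Tendsto (fun n ↦ t (2 * n + 1)) atTop atTop := by
  have even (n : ℕ) : t 2 ≤ t (2 * n + 2) :=
    (ht.strictMono_two_mul_add hT h₀ h₁ 2).monotone (Nat.zero_le n)
  have odd (n : ℕ) : t 1 + n * (T * t 2) ≤ t (2 * n + 1) := by
    induction n with
    | zero => simp
    | succ n ih =>
      have step : t (2 * (n + 1) + 1) = T * t (2 * n + 2) + 1 * t (2 * n + 1) := ht (2 * n + 1)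
      rw [step]
      push_cast
      nlinarith [even n]
  have h₂ : 0 < t 2 := ht.pos_succ (fun _ ↦ zero_le_one) (fun _ ↦ hT) h₀ h₁ 1
  refine tendsto_atTop_mono odd (tendsto_atTop_add_const_left _ _ ?_)
  exact tendsto_natCast_atTop_atTop.atTop_mul_const (mul_pos hT h₂)

theorem IsSolution.artanh_div_eq_sub (ht : IsSolution (fun _ ↦ 1) (fun _ ↦ T) t) (hT : 0 < T)
    (h₀ : t 0 = 0) (h₁ : 0 < t 1) (n : ℕ) :
    artanh (t 2 / t (2 * n + 4)) =
      artanh (t 1 / t (2 * n + 3)) - artanh (t 1 / t (2 * n + 5)) := by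
  have mono := ht.strictMono_two_mul_add hT h₀.ge h₁ 1
  have h₃ : t 1 < t (2 * n + 3) := mono (Nat.succ_pos n)
  have h₅ : t 1 < t (2 * n + 5) := mono (Nat.succ_pos (n + 1))
  have h₂ : t 2 = T * t 1 := by simpa [h₀] using ht 0
  have hrec : t (2 * n + 5) = T * t (2 * n + 4) + 1 * t (2 * n + 3) := ht (2 * n + 3)
  have hcas : t (2 * n + 4) ^ 2 - t (2 * n + 3) * t (2 * n + 5) = -t 1 ^ 2 := by
    have : t (2 * n + 4) ^ 2 - t (2 * n + 3) * t (2 * n + 5) =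
        (-1) ^ (2 * n + 3) * (t 1 ^ 2 - t 0 * t 2) := ht.cassini (2 * n + 3)
    rw [h₀, Odd.neg_one_pow ⟨n + 1, by ring⟩] at this
    linarith
  have hu : |t 1 / t (2 * n + 3)| < 1 := by
    rw [abs_of_pos (div_pos h₁ (h₁.trans h₃)), div_lt_one (h₁.trans h₃)]
    exact h₃
  have hv : |t 1 / t (2 * n + 5)| < 1 := by
    rw [abs_of_pos (div_pos h₁ (h₁.trans h₅)), div_lt_one (h₁.trans h₅)]
    exact h₅
  rw [artanh_sub_artanh hu hv]
  congr 1
  have h₄ : t (2 * n + 4) ≠ 0 :=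
    (ht.pos_succ (fun _ ↦ zero_le_one) (fun _ ↦ hT) h₀.ge h₁ _).ne'
  have hP : t (2 * n + 3) ≠ 0 := (h₁.trans h₃).ne'
  have hQ : t (2 * n + 5) ≠ 0 := (h₁.trans h₅).ne'
  have hden : 1 - t 1 / t (2 * n + 3) * (t 1 / t (2 * n + 5)) =
      t (2 * n + 4) ^ 2 / (t (2 * n + 3) * t (2 * n + 5)) := by
    field_simp
    linear_combination -hcas
  rw [hden]
  field_simp
  linear_combination t (2 * n + 4) * h₂ - t 1 * hrec

theorem IsSolution.hasSum_artanh (ht : IsSolution (fun _ ↦ 1) (fun _ ↦ T) t) (hT : 0 < T)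
    (h₀ : t 0 = 0) (h₁ : 0 < t 1) :
    HasSum (fun n ↦ artanh (t 2 / t (2 * n + 4))) (artanh (t 1 / t 3)) := by
  set f : ℕ → ℝ := fun n ↦ artanh (t 1 / t (2 * n + 3))
  have term (n : ℕ) : artanh (t 2 / t (2 * n + 4)) = f n - f (n + 1) :=
    ht.artanh_div_eq_sub hT h₀ h₁ n
  have hf (n : ℕ) : f (n + 1) ≤ f n := by
    rw [← sub_nonneg, ← term]
    have pos := ht.pos_succ (fun _ ↦ zero_le_one) (fun _ ↦ hT) h₀.ge h₁
    have h₄ : t 2 < t (2 * n + 4) := ht.strictMono_two_mul_add hT h₀.ge h₁ 2 (Nat.succ_pos n)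
    exact artanh_nonneg (div_nonneg (pos 1).le (pos _).le) ((div_lt_one (pos _)).2 h₄)
  have hlim : Tendsto f atTop (𝓝 0) := by
    refine tendsto_artanh_zero.comp (tendsto_const_nhds.div_atTop ?_)
    exact (ht.tendsto_atTop_odd hT h₀.ge h₁).comp (tendsto_add_atTop_nat 1)
  simpa [funext term] using hasSum_sub_succ_of_tendsto_s16 hf hlim

end Constant

theorem isSolution_of_int {R : Type*} [CommRing R] {a b B : ℤ → ℤ}
    (hB : ∀ ν : ℤ, 1 ≤ ν → B ν = b ν * B (ν - 1) + a ν * B (ν - 2)) :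
    IsSolution (fun k : ℕ ↦ (a (k + 1) : R)) (fun k ↦ (b (k + 1) : R))
      (fun k ↦ (B (k - 1) : R)) := by
  intro k
  dsimp only
  rw [show ((k + 2 : ℕ) : ℤ) - 1 = k + 1 by push_cast; ring, hB _ (by omega),
    show (k : ℤ) + 1 - 2 = k - 1 by ring]
  push_cast
  ring

end ThreeTermRec

open ThreeTermRec

theorem artanh_series_general
    (d : ℕ) (hd : 1 ≤ d) (a b : ℤ → ℤ)
    (ha : ∀ ν : ℤ, 1 ≤ ν → 0 < a ν) (hb : ∀ ν : ℤ, 1 ≤ ν → 0 < b ν)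
    (hpa : ∀ ν : ℤ, 1 ≤ ν → a (ν + d) = a ν) (hpb : ∀ ν : ℤ, 1 ≤ ν → b (ν + d) = b ν)
    (B : ℤ → ℤ) (hBm1 : B (-1) = 0) (hB0 : B 0 = 1)
    (hBrec : ∀ ν : ℤ, 1 ≤ ν → B ν = b ν * B (ν - 1) + a ν * B (ν - 2))
    (Dd : ℤ)
    (hD : Dd = (-1 : ℤ) ^ (d - 1) * ∏ i ∈ Finset.range d, a ((i : ℤ) + 1))
    (hD1 : Dd = 1) :
    HasSum
      (fun n : ℕ =>
        artanh ((B (2 * (d : ℤ) - 1) : ℝ) / (B (2 * ((n : ℤ) + 2) * d - 1) : ℝ)))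
      ((1 / 2) * Real.log
        (((B (3 * (d : ℤ) - 1) : ℝ) + (B ((d : ℤ) - 1) : ℝ)) /
          ((B (3 * (d : ℤ) - 1) : ℝ) - (B ((d : ℤ) - 1) : ℝ)))) := by
  set a' : ℕ → ℝ := fun k ↦ a (k + 1)
  set b' : ℕ → ℝ := fun k ↦ b (k + 1)
  set x : ℕ → ℝ := fun k ↦ B (k - 1)
  have hx : IsSolution a' b' x := isSolution_of_int hBrec
  have ha' : Periodic a' d := fun k ↦ by
    simp only [a']; push_cast; rw [add_right_comm, hpa _ (by omega)]
  have hb' : Periodic b' d := fun k ↦ by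
    simp only [b']; push_cast; rw [add_right_comm, hpb _ (by omega)]
  have hdet : (-1) ^ (d + 1) * ∏ i ∈ range d, a' i = 1 := by
    have : (((-1 : ℤ) ^ (d - 1) * ∏ i ∈ range d, a ((i : ℤ) + 1) : ℤ) : ℝ) = 1 := by
      rw [← hD, hD1, Int.cast_one]
    rw [show d + 1 = d - 1 + 2 by omega, pow_add, neg_one_sq, mul_one]
    simp only [a']
    exact_mod_cast this
  have ht := hx.comp_mul ha' hb'
  rw [hdet] at ht
  have ha₀ (k : ℕ) : 0 ≤ a' k := Int.cast_nonneg (ha _ (by omega)).le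
  have hb₀ (k : ℕ) : 0 < b' k := Int.cast_pos.2 (hb _ (by omega))
  have hT : 0 < sol a' b' 1 0 d + sol a' b' 0 1 (d + 1) :=
    add_pos_of_nonneg_of_pos
      ((isSolution_sol a' b' 1 0).nonneg ha₀ (fun k ↦ (hb₀ k).le) zero_le_one le_rfl d)
      ((isSolution_sol a' b' 0 1).pos_succ ha₀ hb₀ le_rfl zero_lt_one d)
  have hxd : 0 < x d := by
    have := hx.pos_succ ha₀ hb₀ (by simp [x, hBm1]) (by simp [x, hB0]) (d - 1)
    rwa [Nat.sub_add_cancel hd] at this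
  have key := ht.hasSum_artanh hT (by simp [x, hBm1]) (by simpa using hxd)
  rw [← artanh_div]
  convert key using 3
  all_goals simp only [x]; push_cast; ring_nf

/-- The inverse-hyperbolic-tangent telescoping series: if `D_d = 1` then
`∑_{n≥2} artanh(B_{2d−1}/B_{2nd−1}) = (1/2)·ln((B_{3d−1}+B_{d−1})/(B_{3d−1}−B_{d−1}))`
(the series is indexed here by `n : ℕ` via the shift `n ↦ n + 2`). -/
theorem artanh_series
    (d : ℕ) (hd : 1 ≤ d) (a b : ℤ → ℤ)
    (ha : ∀ ν : ℤ, 1 ≤ ν → 0 < a ν) (hb : ∀ ν : ℤ, 1 ≤ ν → 0 < b ν)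
    (hpa : ∀ ν : ℤ, 1 ≤ ν → a (ν + d) = a ν) (hpb : ∀ ν : ℤ, 1 ≤ ν → b (ν + d) = b ν)
    (B : ℤ → ℤ) (hBm1 : B (-1) = 0) (hB0 : B 0 = 1)
    (hBrec : ∀ ν : ℤ, 1 ≤ ν → B ν = b ν * B (ν - 1) + a ν * B (ν - 2))
    (Cd Dd Δ : ℤ)
    (hC : B ((d : ℤ) - 1) * Cd = B (2 * (d : ℤ) - 1))
    (hD : Dd = (-1 : ℤ) ^ (d - 1) * ∏ i ∈ Finset.range d, a ((i : ℤ) + 1))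
    (hΔ : Δ = Cd ^ 2 + 4 * Dd)
    (hD1 : Dd = 1) :
    HasSum
      (fun n : ℕ =>
        artanh ((B (2 * (d : ℤ) - 1) : ℝ) / (B (2 * ((n : ℤ) + 2) * d - 1) : ℝ)))
      ((1 / 2) * Real.log
        (((B (3 * (d : ℤ) - 1) : ℝ) + (B ((d : ℤ) - 1) : ℝ)) /
          ((B (3 * (d : ℤ) - 1) : ℝ) - (B ((d : ℤ) - 1) : ℝ)))) :=
  artanh_series_general d hd a b ha hb hpa hpb B hBm1 hB0 hBrec Dd hD hD1
end

section
/- For all positive integers m and n, if m divides n then the integer B_{md−1} divides B_{nd−1}. -/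
/-!
Writing `M ν = !![b ν, a ν; 1, 0]`, the recurrence says `(B ν, B (ν - 1)) = M ν (B (ν - 1), B (ν - 2))`,
so the product `T t = M t ⋯ M 1` has first column `(B t, B (t - 1))`. By periodicity `T (n d) = (T d) ^ n`,
and the lower-left entry of a `2 × 2` matrix divides the lower-left entry of each of its powers.
-/

theorem Matrix.apply_one_zero_dvd_pow_apply_one_zero {R : Type*} [CommSemiring R]
    (P : Matrix (Fin 2) (Fin 2) R) (k : ℕ) : P 1 0 ∣ (P ^ k) 1 0 := by
  induction k with
  | zero => simp
  | succ k ih =>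
    rw [pow_succ, Matrix.mul_apply, Fin.sum_univ_two]
    exact dvd_add (ih.mul_right _) (dvd_mul_left _ _)

section TransferMatrix

variable {R : Type*} [Semiring R] (a b : ℤ → R)

def transferMatrix (ν : ℤ) : Matrix (Fin 2) (Fin 2) R :=
  !![b ν, a ν; 1, 0]

/-- `transferProd a b k t = transferMatrix a b (k + t) * ⋯ * transferMatrix a b (k + 1)`. -/
def transferProd (k : ℤ) : ℕ → Matrix (Fin 2) (Fin 2) R
  | 0 => 1
  | t + 1 => transferMatrix a b (k + t + 1) * transferProd k t

theorem transferProd_add (k : ℤ) (s t : ℕ) :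
    transferProd a b k (s + t) = transferProd a b (k + s) t * transferProd a b k s := by
  induction t with
  | zero => simp [transferProd]
  | succ t ih =>
    rw [← add_assoc, transferProd, ih, transferProd, mul_assoc]
    push_cast
    ring_nf

variable {a b}

theorem transferProd_add_period {d : ℤ} (hpa : ∀ ν : ℤ, 1 ≤ ν → a (ν + d) = a ν)
    (hpb : ∀ ν : ℤ, 1 ≤ ν → b (ν + d) = b ν) {k : ℤ} (hk : 0 ≤ k) (t : ℕ) :
    transferProd a b (k + d) t = transferProd a b k t := by
  induction t with
  | zero => rfl
  | succ t ih =>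
    have hν : 1 ≤ k + t + 1 := by omega
    rw [transferProd, transferProd, ih, add_right_comm k d, add_right_comm _ d, transferMatrix,
      transferMatrix, hpa _ hν, hpb _ hν]

theorem transferProd_mul_period {d : ℕ} (hpa : ∀ ν : ℤ, 1 ≤ ν → a (ν + d) = a ν)
    (hpb : ∀ ν : ℤ, 1 ≤ ν → b (ν + d) = b ν) (n : ℕ) :
    transferProd a b 0 (n * d) = transferProd a b 0 d ^ n := by
  induction n with
  | zero => simp [transferProd]
  | succ n ih =>
    rw [add_one_mul, add_comm, transferProd_add,
      transferProd_add_period hpa hpb le_rfl, ih, pow_succ]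

theorem transferProd_zero_apply {B : ℤ → R} (hBm1 : B (-1) = 0) (hB0 : B 0 = 1)
    (hBrec : ∀ ν : ℤ, 1 ≤ ν → B ν = b ν * B (ν - 1) + a ν * B (ν - 2)) (t : ℕ) :
    transferProd a b 0 t 0 0 = B t ∧ transferProd a b 0 t 1 0 = B (t - 1) := by
  induction t with
  | zero => simp [transferProd, hBm1, hB0]
  | succ t ih =>
    simp only [transferProd, transferMatrix, Matrix.mul_apply, Fin.sum_univ_two, ih, zero_add]
    refine ⟨?_, by simp⟩
    push_cast
    rw [hBrec (t + 1) (by omega), show (t : ℤ) + 1 - 2 = t - 1 by ring]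
    simp

end TransferMatrix

theorem divisibility_sequence_general
    (d : ℕ) (a b : ℤ → ℤ)
    (hpa : ∀ ν : ℤ, 1 ≤ ν → a (ν + d) = a ν) (hpb : ∀ ν : ℤ, 1 ≤ ν → b (ν + d) = b ν)
    (B : ℤ → ℤ) (hBm1 : B (-1) = 0) (hB0 : B 0 = 1)
    (hBrec : ∀ ν : ℤ, 1 ≤ ν → B ν = b ν * B (ν - 1) + a ν * B (ν - 2)) :
    ∀ m n : ℕ, 1 ≤ m → 1 ≤ n → m ∣ n →
      B ((m : ℤ) * d - 1) ∣ B ((n : ℤ) * d - 1) := by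
  have hB (n : ℕ) : B ((n : ℤ) * d - 1) = (transferProd a b 0 d ^ n) 1 0 := by
    rw [← transferProd_mul_period hpa hpb, (transferProd_zero_apply hBm1 hB0 hBrec _).2]
    push_cast
    rfl
  rintro m n - - ⟨k, rfl⟩
  rw [hB, hB, pow_mul]
  exact Matrix.apply_one_zero_dvd_pow_apply_one_zero _ k

/-- `(B_{nd−1})_{n≥1}` is a divisibility sequence: if `m ∣ n` then `B_{md−1} ∣ B_{nd−1}`. -/
theorem divisibility_sequence
    (d : ℕ) (hd : 1 ≤ d) (a b : ℤ → ℤ)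
    (ha : ∀ ν : ℤ, 1 ≤ ν → 0 < a ν) (hb : ∀ ν : ℤ, 1 ≤ ν → 0 < b ν)
    (hpa : ∀ ν : ℤ, 1 ≤ ν → a (ν + d) = a ν) (hpb : ∀ ν : ℤ, 1 ≤ ν → b (ν + d) = b ν)
    (B : ℤ → ℤ) (hBm1 : B (-1) = 0) (hB0 : B 0 = 1)
    (hBrec : ∀ ν : ℤ, 1 ≤ ν → B ν = b ν * B (ν - 1) + a ν * B (ν - 2)) :
    ∀ m n : ℕ, 1 ≤ m → 1 ≤ n → m ∣ n →
      B ((m : ℤ) * d - 1) ∣ B ((n : ℤ) * d - 1) :=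
  divisibility_sequence_general d a b hpa hpb B hBm1 hB0 hBrec
end
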